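/- arXiv:1208.1338 — 8 statements merged into one kernel-verified Lean document; each statement's English description precedes it below -/
import Mathlib

section
/- Suppose there exist constants γ > 0, μ > 0, L > 0 and T₀ ≥ 0 such that ∫_t^{t+γ} (f(s) − a(s)·L) ds < −μ for all t ≥ T₀. Then liminf_{t→∞} x(t) < L. (This is the deterministic pathwise claim (CL1) established inside the proof of Theorem 3.3 of the paper, which holds along almost every sample path of the stochastic logistic equation.) -/
open Filter MeasureTheory Set intervalIntegral

/-- Pathwise claim (CL1) in the proof of Theorem 3.3: if
`∫_t^{t+γ} (f(s) − a(s)L) ds < −μ` for all `t ≥ T₀`, then `liminf_{t→∞} x(t) < L`. -/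
theorem stmt_4 (f a x M : ℝ → ℝ)
    (hf_cont : ContinuousOn f (Set.Ici (0 : ℝ)))
    (ha_cont : ContinuousOn a (Set.Ici (0 : ℝ)))
    (hf_bdd : ∃ C : ℝ, ∀ t ≥ (0 : ℝ), |f t| ≤ C)
    (ha_bdd : ∃ C : ℝ, ∀ t ≥ (0 : ℝ), |a t| ≤ C)
    (ha_nonneg : ∀ s ≥ (0 : ℝ), 0 ≤ a s)
    (hx_pos : ∀ t ≥ (0 : ℝ), 0 < x t)
    (hx_cont : ContinuousOn x (Set.Ici (0 : ℝ)))
    (hM : Filter.Tendsto (fun t => M t / t) Filter.atTop (nhds 0))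
    (heq : ∀ t₁ t₂ : ℝ, 0 ≤ t₁ → t₁ ≤ t₂ →
      Real.log (x t₂) - Real.log (x t₁)
        = (∫ s in t₁..t₂, (f s - a s * x s)) + (M t₂ - M t₁))
    (γ μ L T₀ : ℝ) (hγ : 0 < γ) (hμ : 0 < μ) (hL : 0 < L) (hT₀ : 0 ≤ T₀)
    (hint : ∀ t ≥ T₀, (∫ s in t..(t + γ), (f s - a s * L)) < -μ) :
    Filter.liminf x Filter.atTop < L := by
  by_contra hcon
  push_neg at hcon
  -- bound for a
  obtain ⟨Ca, hCa⟩ := ha_bdd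
  have hCa0 : 0 ≤ Ca := le_trans (abs_nonneg _) (hCa 0 le_rfl)
  -- choose ε
  set ε : ℝ := min (L / 2) (μ / (2 * γ * (Ca + 1))) with hε_def
  have hεpos : 0 < ε := lt_min (by linarith) (by positivity)
  have hεL : ε < L := lt_of_le_of_lt (min_le_left _ _) (by linarith)
  have hεC : ε * (Ca * γ) ≤ μ / 2 := by
    have h1 : ε ≤ μ / (2 * γ * (Ca + 1)) := min_le_right _ _
    have h2 : ε * (2 * γ * (Ca + 1)) ≤ μ := by
      rw [← le_div_iff₀ (by positivity)] ; exact h1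
    nlinarith [mul_nonneg (le_of_lt hεpos) (le_of_lt hγ)]
  -- x is eventually ≥ L - ε
  have hxb : Filter.IsBoundedUnder (· ≥ ·) Filter.atTop x :=
    ⟨0, Filter.eventually_map.2 (by filter_upwards [eventually_ge_atTop (0:ℝ)] with t ht using (hx_pos t ht).le)⟩
  have hev : ∀ᶠ t in Filter.atTop, L - ε < x t :=
    Filter.eventually_lt_of_lt_liminf (lt_of_lt_of_le (by linarith) hcon) hxb
  obtain ⟨T₁, hT₁⟩ := (hev.and (eventually_ge_atTop (max T₀ 0))).exists_forall_of_atTop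
  set T : ℝ := max T₁ (max T₀ 0) with hT_def
  have hT0 : (0:ℝ) ≤ T := le_trans (le_max_right T₀ 0) (le_max_right _ _)
  have hTT₀ : T₀ ≤ T := le_trans (le_max_left T₀ 0) (le_max_right _ _)
  have hxT : ∀ t ≥ T, L - ε < x t := fun t ht =>
    (hT₁ t (le_trans (le_max_left _ _) ht)).1
  -- window estimate
  have hwin : ∀ t ≥ T, Real.log (x (t + γ)) - Real.log (x t)
      ≤ -(μ/2) + (M (t + γ) - M t) := by
    intro t ht
    have ht0 : (0:ℝ) ≤ t := le_trans hT0 ht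
    have htγ : t ≤ t + γ := by linarith
    have hsub : Set.uIcc t (t + γ) ⊆ Set.Ici (0:ℝ) := by
      rw [Set.uIcc_of_le htγ]
      intro s hs; exact le_trans ht0 hs.1
    have hIf : IntervalIntegrable (fun s => f s - a s * x s) volume t (t + γ) := by
      apply ContinuousOn.intervalIntegrable
      exact ((hf_cont.mono hsub).sub ((ha_cont.mono hsub).mul (hx_cont.mono hsub)))
    have hIg : IntervalIntegrable (fun s => (f s - a s * L) + ε * a s) volume t (t + γ) := by
      apply ContinuousOn.intervalIntegrable
      exact ((hf_cont.mono hsub).sub ((ha_cont.mono hsub).mul continuousOn_const)).add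
        (continuousOn_const.mul (ha_cont.mono hsub))
    have hIfL : IntervalIntegrable (fun s => f s - a s * L) volume t (t + γ) :=
      ContinuousOn.intervalIntegrable
        ((hf_cont.mono hsub).sub ((ha_cont.mono hsub).mul continuousOn_const))
    have hIa : IntervalIntegrable a volume t (t + γ) :=
      ContinuousOn.intervalIntegrable (ha_cont.mono hsub)
    have hmono : (∫ s in t..(t+γ), (f s - a s * x s))
        ≤ ∫ s in t..(t+γ), ((f s - a s * L) + ε * a s) := by
      apply intervalIntegral.integral_mono_on htγ hIf hIg
      intro s hs
      have hs0 : (0:ℝ) ≤ s := le_trans ht0 hs.1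
      have hxs : L - ε < x s := hxT s (le_trans ht hs.1)
      have has : 0 ≤ a s := ha_nonneg s hs0
      nlinarith
    have hsplit : (∫ s in t..(t+γ), ((f s - a s * L) + ε * a s))
        = (∫ s in t..(t+γ), (f s - a s * L)) + ε * ∫ s in t..(t+γ), a s := by
      rw [intervalIntegral.integral_add hIfL (hIa.const_mul ε),
        intervalIntegral.integral_const_mul]
    have hainta : (∫ s in t..(t+γ), a s) ≤ Ca * γ := by
      have := intervalIntegral.integral_mono_on htγ hIa
        (_root_.intervalIntegrable_const (c := Ca)) (fun s hs => le_trans (le_abs_self _)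
          (hCa s (le_trans ht0 hs.1)))
      simpa [mul_comm] using this
    have hintb : (∫ s in t..(t+γ), (f s - a s * L)) < -μ := hint t (le_trans hTT₀ ht)
    have heqt := heq t (t + γ) ht0 htγ
    have hεa : ε * (∫ s in t..(t+γ), a s) ≤ μ / 2 :=
      le_trans (by nlinarith [hεpos.le]) hεC
    rw [heqt]
    have : (∫ s in t..(t+γ), (f s - a s * x s)) ≤ -(μ/2) := by
      rw [hsplit] at hmono; linarith
    linarith
  -- telescoping
  have htel : ∀ n : ℕ, Real.log (x (T + n * γ))
      ≤ Real.log (x T) - n * (μ/2) + (M (T + n * γ) - M T) := by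
    intro n
    induction n with
    | zero => simp
    | succ n ih =>
      have h1 := hwin (T + n * γ) (by nlinarith [hγ.le, (Nat.cast_nonneg n : (0:ℝ) ≤ n)])
      have harg : T + (n+1 : ℕ) * γ = T + n * γ + γ := by push_cast; ring
      rw [harg]
      push_cast
      push_cast at ih
      linarith
  -- M along the sequence
  have hseq : Filter.Tendsto (fun n : ℕ => T + n * γ) Filter.atTop Filter.atTop := by
    apply Filter.tendsto_atTop_add_const_left
    exact Filter.Tendsto.atTop_mul_const hγ tendsto_natCast_atTop_atTop
  have hMn : Filter.Tendsto (fun n : ℕ => M (T + n * γ) / (T + n * γ))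
      Filter.atTop (nhds 0) := hM.comp hseq
  have hδ : (0:ℝ) < μ / (4 * γ) := by positivity
  have hMev : ∀ᶠ n : ℕ in Filter.atTop, M (T + n * γ) / (T + n * γ) < μ / (4 * γ) :=
    hMn.eventually (gt_mem_nhds hδ)
  have hMbd : ∀ᶠ n : ℕ in Filter.atTop,
      M (T + n * γ) ≤ μ / (4 * γ) * (T + n * γ) := by
    filter_upwards [hMev, eventually_ge_atTop 1] with n hn hn1
    have hpos : (0:ℝ) < T + n * γ := by
      have : (1:ℝ) ≤ (n:ℝ) := by exact_mod_cast hn1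
      nlinarith
    exact le_of_lt ((div_lt_iff₀ hpos).mp hn)
  -- derive contradiction
  set D : ℝ := Real.log (x T) - M T + μ / (4 * γ) * T - Real.log (L - ε) with hD
  have hbig : ∀ᶠ n : ℕ in Filter.atTop, D < n * (μ/4) := by
    have : Filter.Tendsto (fun n : ℕ => (n:ℝ) * (μ/4)) Filter.atTop Filter.atTop :=
      Filter.Tendsto.atTop_mul_const (by linarith) tendsto_natCast_atTop_atTop
    exact this.eventually_gt_atTop D
  obtain ⟨n, hn1, hn2⟩ := (hMbd.and hbig).exists
  have hlow : Real.log (L - ε) ≤ Real.log (x (T + n * γ)) := by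
    apply Real.log_le_log (by linarith)
    exact (hxT _ (by nlinarith [(Nat.cast_nonneg n : (0:ℝ) ≤ n), hγ.le])).le
  have hup := htel n
  have hMdist : μ / (4 * γ) * (T + n * γ) = μ / (4 * γ) * T + n * (μ/4) := by
    field_simp
  rw [hMdist] at hn1
  simp only [hD] at hn2
  linarith
end

section
/- Suppose there exist constants γ > 0, μ > 0, c > 0, T₀ ≥ 0 and T₁ ≥ 0 such that ∫_t^{t+γ} (f(s) − a(s)·c) ds < −μ for all t ≥ T₀ and x(t) ≥ c for all t ≥ T₁. Then limsup_{t→∞} (ln x(t))/t ≤ −μ/γ; in particular x(t) → 0 as t → ∞. (This is the exponential decay estimate (T1.6) derived in the proof of Theorem 3.3 of the paper.) -/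
open Filter MeasureTheory Set intervalIntegral

/-!
Since `a ≥ 0` and `x ≥ c` eventually, `f − a x ≤ f − a c`, so
`ln x(t) ≤ ln x(T) + ∫_T^t (f − a c) + M(t) − M(T)`. Cutting `[T, t]` into `⌊(t − T)/γ⌋`
windows of length `γ`, each contributing at most `−μ`, and a leftover piece of length `< γ`
placed at the start, where it is bounded by `∫_T^{T+γ} |f − a c|` independently of `t`, gives
`ln x(t) ≤ B + M(t) − (μ/γ) t`. Dividing by `t` and using `M(t)/t → 0` yields the limsup
bound and `ln x(t) → −∞`.
-/

theorem ContinuousOn.intervalIntegrable_of_Ici {g : ℝ → ℝ} {T a b : ℝ}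
    (hg : ContinuousOn g (Ici T)) (ha : T ≤ a) (hb : T ≤ b) :
    IntervalIntegrable g volume a b :=
  (hg.mono fun _ hs => (le_min ha hb).trans hs.1).intervalIntegrable

section WindowIntegral

variable {g : ℝ → ℝ} {T γ μ : ℝ}

theorem integral_add_nat_mul_le (hg : ContinuousOn g (Ici T)) (hγ : 0 ≤ γ)
    (hwin : ∀ t ≥ T, ∫ s in t..t + γ, g s ≤ -μ) (n : ℕ) {t : ℝ} (ht : T ≤ t) :
    ∫ s in t..t + n * γ, g s ≤ -(n * μ) := by
  induction n with
  | zero => simp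
  | succ n ih =>
    have hnγ : T ≤ t + n * γ := ht.trans (le_add_of_nonneg_right (by positivity))
    rw [Nat.cast_succ, add_mul, one_mul, ← add_assoc,
      ← integral_add_adjacent_intervals (hg.intervalIntegrable_of_Ici ht hnγ)
        (hg.intervalIntegrable_of_Ici hnγ (by linarith))]
    linarith [hwin (t + n * γ) hnγ]

theorem exists_integral_le_sub_mul (hg : ContinuousOn g (Ici T)) (hγ : 0 < γ) (hμ : 0 ≤ μ)
    (hwin : ∀ t ≥ T, ∫ s in t..t + γ, g s ≤ -μ) :
    ∃ B, ∀ t ≥ T, ∫ s in T..t, g s ≤ B - μ / γ * t := by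
  refine ⟨(∫ s in T..T + γ, |g s|) + μ + μ / γ * T, fun t ht => ?_⟩
  set n := ⌊(t - T) / γ⌋₊
  have hn_le : n * γ ≤ t - T :=
    (le_div_iff₀ hγ).mp (Nat.floor_le (div_nonneg (sub_nonneg.2 ht) hγ.le))
  have hn_gt : t - T < (n + 1) * γ := (div_lt_iff₀ hγ).mp (Nat.lt_floor_add_one _)
  set r := t - T - n * γ with hr
  have head : ∫ s in T..T + r, g s ≤ ∫ s in T..T + γ, |g s| :=
    calc ∫ s in T..T + r, g s ≤ ∫ s in T..T + r, |g s| :=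
          integral_mono_on (by linarith) (hg.intervalIntegrable_of_Ici le_rfl (by linarith))
            (hg.abs.intervalIntegrable_of_Ici le_rfl (by linarith)) fun s _ => le_abs_self _
      _ ≤ ∫ s in T..T + γ, |g s| :=
          integral_mono_interval le_rfl (by linarith) (by linarith)
            (Eventually.of_forall fun s => abs_nonneg _)
            (hg.abs.intervalIntegrable_of_Ici le_rfl (by linarith))
  have tail : ∫ s in T + r..t, g s ≤ -(n * μ) := by
    have h := integral_add_nat_mul_le hg hγ.le hwin n (t := T + r) (by linarith)
    rwa [show T + r + n * γ = t by rw [hr]; ring] at h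
  have hnμ : μ / γ * (t - T) ≤ (n + 1) * μ :=
    calc μ / γ * (t - T) ≤ μ / γ * ((n + 1) * γ) := by gcongr
      _ = (n + 1) * μ := by field_simp
  rw [← integral_add_adjacent_intervals (b := T + r)
    (hg.intervalIntegrable_of_Ici le_rfl (by linarith))
    (hg.intervalIntegrable_of_Ici (by linarith) ht)]
  linarith [mul_sub (μ / γ) t T]

end WindowIntegral

section Asymptotics

variable {u M : ℝ → ℝ} {A B κ : ℝ}

theorem tendsto_add_div_sub (hM : Tendsto (fun t => M t / t) atTop (nhds 0)) :
    Tendsto (fun t => (B + M t) / t - κ) atTop (nhds (-κ)) := by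
  have hB : Tendsto (fun t : ℝ => B / t) atTop (nhds 0) :=
    tendsto_const_nhds.div_atTop tendsto_id
  simpa only [add_div, zero_add, zero_sub] using (hB.add hM).sub_const κ

theorem eventually_div_le_add_div_sub (hup : ∀ᶠ t in atTop, u t ≤ B + M t - κ * t) :
    ∀ᶠ t in atTop, u t / t ≤ (B + M t) / t - κ := by
  filter_upwards [hup, eventually_gt_atTop 0] with t h ht
  rw [div_le_iff₀ ht, sub_mul, div_mul_cancel₀ _ ht.ne']
  exact h

theorem limsup_div_le_of_le_add_sub_mul (hM : Tendsto (fun t => M t / t) atTop (nhds 0))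
    (hlow : ∀ᶠ t in atTop, A ≤ u t) (hup : ∀ᶠ t in atTop, u t ≤ B + M t - κ * t) :
    limsup (fun t => u t / t) atTop ≤ -κ := by
  have hw := tendsto_add_div_sub (B := B) (κ := κ) hM
  have hcobdd : IsCoboundedUnder (· ≤ ·) atTop (fun t => u t / t) := by
    refine (isBoundedUnder_of_eventually_ge (a := min A 0) ?_).isCoboundedUnder_le
    filter_upwards [hlow, eventually_ge_atTop 1] with t h ht
    rw [le_div_iff₀ (by linarith)]
    nlinarith [min_le_left A 0, min_le_right A 0]
  calc limsup (fun t => u t / t) atTop ≤ limsup (fun t => (B + M t) / t - κ) atTop :=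
        limsup_le_limsup (eventually_div_le_add_div_sub hup) hcobdd hw.isBoundedUnder_le
    _ = -κ := hw.limsup_eq

theorem tendsto_atBot_of_le_add_sub_mul (hM : Tendsto (fun t => M t / t) atTop (nhds 0))
    (hκ : 0 < κ) (hup : ∀ᶠ t in atTop, u t ≤ B + M t - κ * t) :
    Tendsto u atTop atBot := by
  refine tendsto_atBot_mono' atTop ?_
    (tendsto_id.atTop_mul_neg (neg_lt_zero.2 hκ) (tendsto_add_div_sub (B := B) hM))
  filter_upwards [eventually_div_le_add_div_sub hup, eventually_gt_atTop 0] with t h ht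
  exact (div_le_iff₀' ht).mp h

end Asymptotics

theorem stmt_5_general (f a x M : ℝ → ℝ)
    (hf_cont : ContinuousOn f (Set.Ici (0 : ℝ)))
    (ha_cont : ContinuousOn a (Set.Ici (0 : ℝ)))
    (ha_nonneg : ∀ s ≥ (0 : ℝ), 0 ≤ a s)
    (hx_cont : ContinuousOn x (Set.Ici (0 : ℝ)))
    (hM : Filter.Tendsto (fun t => M t / t) Filter.atTop (nhds 0))
    (heq : ∀ t₁ t₂ : ℝ, 0 ≤ t₁ → t₁ ≤ t₂ →
      Real.log (x t₂) - Real.log (x t₁)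
        = (∫ s in t₁..t₂, (f s - a s * x s)) + (M t₂ - M t₁))
    (γ μ c T₀ T₁ : ℝ) (hγ : 0 < γ) (hμ : 0 < μ) (hc : 0 < c)
    (hint : ∀ t ≥ T₀, (∫ s in t..(t + γ), (f s - a s * c)) < -μ)
    (hxc : ∀ t ≥ T₁, c ≤ x t) :
    Filter.limsup (fun t => Real.log (x t) / t) Filter.atTop ≤ -μ / γ ∧
      Filter.Tendsto x Filter.atTop (nhds 0) := by
  set T := max (max T₀ T₁) 0
  have hT₀T : T₀ ≤ T := (le_max_left _ _).trans (le_max_left _ _)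
  have hT₁T : T₁ ≤ T := (le_max_right _ _).trans (le_max_left _ _)
  have hT : 0 ≤ T := le_max_right _ _
  have hcont_x : ContinuousOn (fun s => f s - a s * x s) (Ici T) :=
    (hf_cont.sub (ha_cont.mul hx_cont)).mono (Ici_subset_Ici.2 hT)
  have hcont_c : ContinuousOn (fun s => f s - a s * c) (Ici T) :=
    (hf_cont.sub (ha_cont.mul continuousOn_const)).mono (Ici_subset_Ici.2 hT)
  obtain ⟨B, hB⟩ := exists_integral_le_sub_mul hcont_c hγ hμ.le
    fun t ht => (hint t (hT₀T.trans ht)).le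
  have hup : ∀ᶠ t in atTop,
      Real.log (x t) ≤ (Real.log (x T) - M T + B) + M t - μ / γ * t := by
    filter_upwards [eventually_ge_atTop T] with t ht
    have hcmp : ∫ s in T..t, (f s - a s * x s) ≤ ∫ s in T..t, (f s - a s * c) :=
      integral_mono_on ht (hcont_x.intervalIntegrable_of_Ici le_rfl ht)
        (hcont_c.intervalIntegrable_of_Ici le_rfl ht) fun s hs => by
          nlinarith [hxc s (hT₁T.trans hs.1), ha_nonneg s (hT.trans hs.1)]
    linarith [heq T t hT ht, hB t ht]
  have hlow : ∀ᶠ t in atTop, Real.log c ≤ Real.log (x t) := by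
    filter_upwards [eventually_ge_atTop T₁] with t ht
    exact Real.log_le_log hc (hxc t ht)
  refine ⟨by simpa only [neg_div] using limsup_div_le_of_le_add_sub_mul hM hlow hup, ?_⟩
  refine (Real.tendsto_exp_atBot.comp
    (tendsto_atBot_of_le_add_sub_mul hM (div_pos hμ hγ) hup)).congr' ?_
  filter_upwards [eventually_ge_atTop T₁] with t ht
  exact Real.exp_log (hc.trans_le (hxc t ht))

/-- Exponential decay estimate (T1.6) in the proof of Theorem 3.3: if
`∫_t^{t+γ} (f(s) − a(s)c) ds < −μ` for all `t ≥ T₀` and `x(t) ≥ c` for all `t ≥ T₁`,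
then `limsup (ln x(t))/t ≤ −μ/γ`, and in particular `x(t) → 0`. -/
theorem stmt_5 (f a x M : ℝ → ℝ)
    (hf_cont : ContinuousOn f (Set.Ici (0 : ℝ)))
    (ha_cont : ContinuousOn a (Set.Ici (0 : ℝ)))
    (hf_bdd : ∃ C : ℝ, ∀ t ≥ (0 : ℝ), |f t| ≤ C)
    (ha_bdd : ∃ C : ℝ, ∀ t ≥ (0 : ℝ), |a t| ≤ C)
    (ha_nonneg : ∀ s ≥ (0 : ℝ), 0 ≤ a s)
    (hx_pos : ∀ t ≥ (0 : ℝ), 0 < x t)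
    (hx_cont : ContinuousOn x (Set.Ici (0 : ℝ)))
    (hM : Filter.Tendsto (fun t => M t / t) Filter.atTop (nhds 0))
    (heq : ∀ t₁ t₂ : ℝ, 0 ≤ t₁ → t₁ ≤ t₂ →
      Real.log (x t₂) - Real.log (x t₁)
        = (∫ s in t₁..t₂, (f s - a s * x s)) + (M t₂ - M t₁))
    (γ μ c T₀ T₁ : ℝ) (hγ : 0 < γ) (hμ : 0 < μ) (hc : 0 < c)
    (hT₀ : 0 ≤ T₀) (hT₁ : 0 ≤ T₁)
    (hint : ∀ t ≥ T₀, (∫ s in t..(t + γ), (f s - a s * c)) < -μ)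
    (hxc : ∀ t ≥ T₁, c ≤ x t) :
    Filter.limsup (fun t => Real.log (x t) / t) Filter.atTop ≤ -μ / γ ∧
      Filter.Tendsto x Filter.atTop (nhds 0) :=
  stmt_5_general f a x M hf_cont ha_cont ha_nonneg hx_cont hM heq γ μ c T₀ T₁ hγ hμ hc hint hxc
end

section
/- Suppose there exist constants λ > 0, μ > 0, c > 0, T₀ ≥ 0 and T₁ ≥ 0 such that ∫_t^{t+λ} (f(s) − a(s)·c) ds > μ for all t ≥ T₀ and x(t) ≤ c for all t ≥ T₁. Then liminf_{t→∞} (ln x(t))/t ≥ μ/λ; in particular x(t) → ∞ as t → ∞. (This is the exponential growth estimate (T2.6) derived in the proof of Theorem 3.6 of the paper.) -/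
open Filter MeasureTheory Set intervalIntegral

/-- Exponential growth estimate (T2.6) in the proof of Theorem 3.6: if
`∫_t^{t+λ} (f(s) − a(s)c) ds > μ` for all `t ≥ T₀` and `x(t) ≤ c` for all `t ≥ T₁`,
then `liminf (ln x(t))/t ≥ μ/λ`, and in particular `x(t) → ∞`. -/
theorem stmt_7 (f a x M : ℝ → ℝ)
    (hf_cont : ContinuousOn f (Set.Ici (0 : ℝ)))
    (ha_cont : ContinuousOn a (Set.Ici (0 : ℝ)))
    (hf_bdd : ∃ C : ℝ, ∀ t ≥ (0 : ℝ), |f t| ≤ C)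
    (ha_bdd : ∃ C : ℝ, ∀ t ≥ (0 : ℝ), |a t| ≤ C)
    (ha_nonneg : ∀ s ≥ (0 : ℝ), 0 ≤ a s)
    (hx_pos : ∀ t ≥ (0 : ℝ), 0 < x t)
    (hx_cont : ContinuousOn x (Set.Ici (0 : ℝ)))
    (hM : Filter.Tendsto (fun t => M t / t) Filter.atTop (nhds 0))
    (heq : ∀ t₁ t₂ : ℝ, 0 ≤ t₁ → t₁ ≤ t₂ →
      Real.log (x t₂) - Real.log (x t₁)
        = (∫ s in t₁..t₂, (f s - a s * x s)) + (M t₂ - M t₁))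
    (lam μ c T₀ T₁ : ℝ) (hlam : 0 < lam) (hμ : 0 < μ) (hc : 0 < c)
    (hT₀ : 0 ≤ T₀) (hT₁ : 0 ≤ T₁)
    (hint : ∀ t ≥ T₀, μ < ∫ s in t..(t + lam), (f s - a s * c))
    (hxc : ∀ t ≥ T₁, x t ≤ c) :
    μ / lam ≤ Filter.liminf (fun t => Real.log (x t) / t) Filter.atTop ∧
      Filter.Tendsto x Filter.atTop Filter.atTop := by
  obtain ⟨Cf, hCf⟩ := hf_bdd
  obtain ⟨Ca, hCa⟩ := ha_bdd
  have hCf0 : 0 ≤ Cf := le_trans (abs_nonneg _) (hCf 0 le_rfl)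
  have hCa0 : 0 ≤ Ca := le_trans (abs_nonneg _) (hCa 0 le_rfl)
  set K : ℝ := Cf + Ca * c with hK
  have hK0 : 0 ≤ K := by positivity
  set T : ℝ := max T₀ T₁ with hT
  have hT0 : (0 : ℝ) ≤ T := le_trans hT₀ (le_max_left _ _)
  -- continuity and integrability
  have hg_cont : ContinuousOn (fun s => f s - a s * c) (Set.Ici (0 : ℝ)) :=
    hf_cont.sub (ha_cont.mul continuousOn_const)
  have hgx_cont : ContinuousOn (fun s => f s - a s * x s) (Set.Ici (0 : ℝ)) :=
    hf_cont.sub (ha_cont.mul hx_cont)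
  have hint_of : ∀ (g : ℝ → ℝ), ContinuousOn g (Set.Ici (0 : ℝ)) →
      ∀ u v : ℝ, 0 ≤ u → u ≤ v → IntervalIntegrable g volume u v := by
    intro g hg u v hu huv
    exact (hg.mono (Set.Icc_subset_Ici_self.trans
      (Set.Ici_subset_Ici.mpr hu))).intervalIntegrable_of_Icc huv
  have hg_int := hint_of _ hg_cont
  have hgx_int := hint_of _ hgx_cont
  -- Step A: lower bound on integral over [T, T + n λ]
  have stepA : ∀ n : ℕ, (n : ℝ) * μ ≤ ∫ s in T..(T + n * lam), (f s - a s * c) := by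
    intro n
    induction n with
    | zero => simp
    | succ n ih =>
      have hn0 : (0 : ℝ) ≤ (n : ℝ) * lam := by positivity
      have h1 : T + (n : ℝ) * lam ≥ T₀ := by
        have := le_max_left T₀ T₁
        linarith
      have h2 := hint (T + (n : ℝ) * lam) h1
      have hsplit :
          (∫ s in T..(T + (n : ℝ) * lam), (f s - a s * c))
            + ∫ s in (T + (n : ℝ) * lam)..((T + (n : ℝ) * lam) + lam), (f s - a s * c)
          = ∫ s in T..((T + (n : ℝ) * lam) + lam), (f s - a s * c) := by
        apply intervalIntegral.integral_add_adjacent_intervals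
        · exact hg_int T (T + n * lam) hT0 (by linarith)
        · exact hg_int (T + n * lam) (T + n * lam + lam) (by linarith) (by linarith)
      have heqpt : T + ((n : ℕ) + 1 : ℕ) * lam = (T + (n : ℝ) * lam) + lam := by
        push_cast; ring
      rw [heqpt, ← hsplit]
      push_cast
      linarith
  -- Step B: crude lower bound on integral of g over intervals
  have stepB : ∀ u v : ℝ, 0 ≤ u → u ≤ v →
      -(K * (v - u)) ≤ ∫ s in u..v, (f s - a s * c) := by
    intro u v hu huv
    have hmono : ∀ s ∈ Set.Icc u v, -K ≤ f s - a s * c := by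
      intro s hs
      have hs0 : (0 : ℝ) ≤ s := le_trans hu hs.1
      have h1 : -Cf ≤ f s := neg_le_of_abs_le (hCf s hs0)
      have h2 : a s * c ≤ Ca * c :=
        mul_le_mul_of_nonneg_right (le_trans (le_abs_self _) (hCa s hs0)) hc.le
      simp only [hK]; linarith
    have h3 := intervalIntegral.integral_mono_on huv
      intervalIntegrable_const (hg_int u v hu huv) hmono
    rw [intervalIntegral.integral_const] at h3
    have h4 : (v - u) * (-K) ≤ ∫ s in u..v, (f s - a s * c) := by
      simpa [smul_eq_mul] using h3
    linarith
  -- Step C: compare x with c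
  have stepC : ∀ t : ℝ, T ≤ t →
      (∫ s in T..t, (f s - a s * c)) ≤ ∫ s in T..t, (f s - a s * x s) := by
    intro t ht
    apply intervalIntegral.integral_mono_on ht (hg_int T t hT0 ht) (hgx_int T t hT0 ht)
    intro s hs
    have hs0 : (0 : ℝ) ≤ s := le_trans hT0 hs.1
    have hs1 : T₁ ≤ s := le_trans (le_max_right T₀ T₁) hs.1
    have : a s * x s ≤ a s * c := mul_le_mul_of_nonneg_left (hxc s hs1) (ha_nonneg s hs0)
    linarith
  -- key pointwise lower bound
  set A : ℝ := Real.log (x T) - M T - K * lam - μ * T / lam - μ with hA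
  have key : ∀ t : ℝ, T ≤ t → μ / lam * t + (A + M t) ≤ Real.log (x t) := by
    intro t ht
    set n : ℕ := ⌊(t - T) / lam⌋₊ with hn
    have hnn : (0 : ℝ) ≤ (t - T) / lam := div_nonneg (by linarith) hlam.le
    have h1 : (n : ℝ) ≤ (t - T) / lam := Nat.floor_le hnn
    have h2 : (t - T) / lam < (n : ℝ) + 1 := Nat.lt_floor_add_one _
    have h1' : (n : ℝ) * lam ≤ t - T := by
      calc (n : ℝ) * lam ≤ (t - T) / lam * lam :=
            mul_le_mul_of_nonneg_right h1 hlam.le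
        _ = t - T := div_mul_cancel₀ _ hlam.ne'
    have h2' : t - T < ((n : ℝ) + 1) * lam := by
      calc t - T = (t - T) / lam * lam := (div_mul_cancel₀ _ hlam.ne').symm
        _ < ((n : ℝ) + 1) * lam := mul_lt_mul_of_pos_right h2 hlam
    have hn0 : (0 : ℝ) ≤ (n : ℝ) * lam := by positivity
    have hsplit :
        (∫ s in T..(T + (n : ℝ) * lam), (f s - a s * c))
          + ∫ s in (T + (n : ℝ) * lam)..t, (f s - a s * c)
        = ∫ s in T..t, (f s - a s * c) := by
      apply intervalIntegral.integral_add_adjacent_intervals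
      · exact hg_int T (T + n * lam) hT0 (by linarith)
      · exact hg_int (T + n * lam) t (by linarith) (by linarith)
    have hB := stepB (T + (n : ℝ) * lam) t (by linarith) (by linarith)
    have hA1 := stepA n
    have hC := stepC t ht
    have hlog := heq T t hT0 ht
    have hKb : K * (t - (T + (n : ℝ) * lam)) ≤ K * lam :=
      mul_le_mul_of_nonneg_left (by linarith) hK0
    have h3 : μ / lam * (t - T) ≤ ((n : ℝ) + 1) * μ := by
      calc μ / lam * (t - T) = (t - T) / lam * μ := by ring
        _ ≤ ((n : ℝ) + 1) * μ := mul_le_mul_of_nonneg_right h2.le hμ.le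
    have e1 : μ / lam * (t - T) = μ / lam * t - μ * T / lam := by ring
    rw [e1] at h3
    have hA' : A = Real.log (x T) - M T - K * lam - μ * T / lam - μ := hA
    linarith [hlog, hC, hsplit, hA1, hB, hKb, h3]
  -- eventual lower bound for log x t / t
  have hev : ∀ᶠ t in atTop, μ / lam + (A + M t) / t ≤ Real.log (x t) / t := by
    filter_upwards [eventually_ge_atTop (max T 1)] with t ht
    have ht1 : (1 : ℝ) ≤ t := le_trans (le_max_right _ _) ht
    have htT : T ≤ t := le_trans (le_max_left _ _) ht
    have htpos : (0 : ℝ) < t := lt_of_lt_of_le one_pos ht1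
    calc μ / lam + (A + M t) / t = (μ / lam * t + (A + M t)) / t := by
          field_simp
      _ ≤ Real.log (x t) / t := div_le_div_of_nonneg_right (key t htT) htpos.le
  -- envelope tends to μ/lam
  have henv : Tendsto (fun t => μ / lam + (A + M t) / t) atTop (nhds (μ / lam)) := by
    have h5 : Tendsto (fun t : ℝ => (A + M t) / t) atTop (nhds 0) := by
      have hA' : Tendsto (fun t : ℝ => A / t) atTop (nhds 0) :=
        tendsto_const_nhds.div_atTop tendsto_id
      have := hA'.add hM
      simp only [add_zero] at this
      refine this.congr fun t => ?_
      rw [add_div]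
    simpa using tendsto_const_nhds.add h5
  -- upper bound for coboundedness
  have upper : ∀ t ≥ (0 : ℝ), Real.log (x t) ≤ Real.log (x 0) + Cf * t + (M t - M 0) := by
    intro t ht
    have hlog := heq 0 t le_rfl ht
    have hintle : (∫ s in (0 : ℝ)..t, (f s - a s * x s)) ≤ ∫ s in (0 : ℝ)..t, Cf := by
      apply intervalIntegral.integral_mono_on ht (hgx_int 0 t le_rfl ht)
        intervalIntegrable_const
      intro s hs
      have hs0 : (0 : ℝ) ≤ s := hs.1
      have h6 : 0 ≤ a s * x s := mul_nonneg (ha_nonneg s hs0) (hx_pos s hs0).le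
      have h7 : f s ≤ Cf := le_of_abs_le (hCf s hs0)
      linarith
    rw [intervalIntegral.integral_const, smul_eq_mul] at hintle
    nlinarith [hlog]
  have hub : ∀ᶠ t in atTop, Real.log (x t) / t ≤ Cf + 1 := by
    have hU : Tendsto (fun t : ℝ => (Real.log (x 0) - M 0) / t + Cf + M t / t) atTop
        (nhds (0 + Cf + 0)) :=
      (((tendsto_const_nhds.div_atTop tendsto_id)).add_const Cf).add hM
    have hUev : ∀ᶠ t in atTop,
        (Real.log (x 0) - M 0) / t + Cf + M t / t ≤ Cf + 1 :=
      hU.eventually (eventually_le_nhds (by linarith))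
    filter_upwards [hUev, eventually_ge_atTop 1] with t hU1 ht1
    have htpos : (0 : ℝ) < t := lt_of_lt_of_le one_pos ht1
    calc Real.log (x t) / t ≤ (Real.log (x 0) + Cf * t + (M t - M 0)) / t :=
          div_le_div_of_nonneg_right (upper t htpos.le) htpos.le
      _ = (Real.log (x 0) - M 0) / t + Cf + M t / t := by
          field_simp; ring
      _ ≤ Cf + 1 := hU1
  -- liminf bound
  have hlb : μ / lam ≤ liminf (fun t => Real.log (x t) / t) atTop := by
    have hliml : liminf (fun t => μ / lam + (A + M t) / t) atTop = μ / lam :=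
      henv.liminf_eq
    rw [← hliml]
    exact Filter.liminf_le_liminf hev henv.isBoundedUnder_ge
      (isCoboundedUnder_ge_of_eventually_le atTop hub)
  -- tendsto atTop part
  have hMev : ∀ᶠ t in atTop, -(μ / (2 * lam)) ≤ M t / t :=
    hM.eventually (eventually_ge_nhds (neg_lt_zero.mpr (by positivity)))
  have hlogto : Tendsto (fun t => Real.log (x t)) atTop atTop := by
    apply tendsto_atTop_mono' atTop
      (show ∀ᶠ t in atTop, μ / (2 * lam) * t + A ≤ Real.log (x t) from ?_)
    · exact tendsto_atTop_add_const_right atTop A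
        (Tendsto.const_mul_atTop (by positivity) tendsto_id)
    · filter_upwards [hMev, eventually_ge_atTop (max T 1)] with t hMt ht
      have ht1 : (1 : ℝ) ≤ t := le_trans (le_max_right _ _) ht
      have htT : T ≤ t := le_trans (le_max_left _ _) ht
      have htpos : (0 : ℝ) < t := lt_of_lt_of_le one_pos ht1
      have hMt' : -(μ / (2 * lam)) * t ≤ M t := by
        have := mul_le_mul_of_nonneg_right hMt htpos.le
        rwa [div_mul_cancel₀ _ htpos.ne'] at this
      have hk := key t htT
      have hhalf : μ / (2 * lam) * t + μ / (2 * lam) * t = μ / lam * t := by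
        field_simp; ring
      nlinarith [hk]
  have hxto : Tendsto x atTop atTop := by
    have h8 : Tendsto (fun t => Real.exp (Real.log (x t))) atTop atTop :=
      Real.tendsto_exp_atTop.comp hlogto
    apply h8.congr'
    filter_upwards [eventually_ge_atTop (0 : ℝ)] with t ht using Real.exp_log (hx_pos t ht)
  exact ⟨hlb, hxto⟩
end

section
/- Suppose there exists γ > 0 with liminf_{t→∞} ∫_t^{t+γ} a(s) ds > 0, and there exists λ > 0 with limsup_{t→∞} ∫_t^{t+λ} f(s) ds ≤ 0. Then liminf_{t→∞} x(t) = 0. (This is the deterministic pathwise extinction claim, equation (T3.3), established inside the proof of Theorem 4.1 of the paper: along every sample path satisfying the pathwise logistic relation with M(t)/t → 0, the liminf of the solution is zero.) -/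
open Filter MeasureTheory Set intervalIntegral

set_option maxHeartbeats 1000000

/-- Summing window bounds: if each window of length `γ` has integral at most `η`,
then the integral over `n` consecutive windows is at most `n * η`. -/
lemma stmt_8_sum_windows {g : ℝ → ℝ} {T γ η : ℝ}
    (hint : ∀ u v : ℝ, T ≤ u → u ≤ v → IntervalIntegrable g MeasureTheory.volume u v)
    (hγ : 0 ≤ γ)
    (hwin : ∀ t ≥ T, (∫ s in t..t+γ, g s) ≤ η) :
    ∀ n : ℕ, (∫ s in T..T + n*γ, g s) ≤ n * η := by
  intro n
  induction n with
  | zero => simp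
  | succ n ih =>
    have hnγ : 0 ≤ (n:ℝ)*γ := mul_nonneg n.cast_nonneg hγ
    have hTn : T ≤ T + n*γ := by linarith
    have h1 : IntervalIntegrable g MeasureTheory.volume T (T + n*γ) := hint _ _ le_rfl hTn
    have h2 : IntervalIntegrable g MeasureTheory.volume (T + n*γ) (T + n*γ + γ) :=
      hint _ _ hTn (by linarith)
    have hsplit := intervalIntegral.integral_add_adjacent_intervals (c := T + n*γ + γ) h1 h2
    have heqn : T + (n+1 : ℕ)*γ = T + n*γ + γ := by push_cast; ring
    rw [heqn, ← hsplit]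
    have hw := hwin (T + n*γ) hTn
    push_cast
    nlinarith [hw, ih]

/-- The key contradiction: if `x ≥ ε` eventually, the logistic relation forces
`log x` to `-∞`, a contradiction. -/
lemma stmt_8_key (f a x M : ℝ → ℝ)
    (hf_cont : ContinuousOn f (Set.Ici (0 : ℝ)))
    (ha_cont : ContinuousOn a (Set.Ici (0 : ℝ)))
    (hf_bdd : ∃ C : ℝ, ∀ t ≥ (0 : ℝ), |f t| ≤ C)
    (ha_nonneg : ∀ s ≥ (0 : ℝ), 0 ≤ a s)
    (hx_pos : ∀ t ≥ (0 : ℝ), 0 < x t)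
    (hx_cont : ContinuousOn x (Set.Ici (0 : ℝ)))
    (hM : Filter.Tendsto (fun t => M t / t) Filter.atTop (nhds 0))
    (heq : ∀ t₁ t₂ : ℝ, 0 ≤ t₁ → t₁ ≤ t₂ →
      Real.log (x t₂) - Real.log (x t₁)
        = (∫ s in t₁..t₂, (f s - a s * x s)) + (M t₂ - M t₁))
    (hH1 : ∃ γ > (0 : ℝ),
      0 < Filter.liminf (fun t => ∫ s in t..(t + γ), a s) Filter.atTop)
    (hH3 : ∃ lam > (0 : ℝ),
      Filter.limsup (fun t => ∫ s in t..(t + lam), f s) Filter.atTop ≤ 0)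
    (ε : ℝ) (hε : 0 < ε) (T₁ : ℝ) (hT₁ : 0 ≤ T₁) (hxε : ∀ t ≥ T₁, ε ≤ x t) : False := by
  obtain ⟨Cf₀, hCf₀⟩ := hf_bdd
  set Cf : ℝ := max Cf₀ 0 with hCfdef
  have hCf : ∀ t ≥ (0:ℝ), |f t| ≤ Cf := fun t ht => (hCf₀ t ht).trans (le_max_left _ _)
  have hCf0 : 0 ≤ Cf := le_max_right _ _
  obtain ⟨γ, hγ, hlim⟩ := hH1
  obtain ⟨lam, hlam, hlimsup⟩ := hH3
  -- integrability helpers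
  have hintf : ∀ u v : ℝ, 0 ≤ u → u ≤ v → IntervalIntegrable f MeasureTheory.volume u v := by
    intro u v hu huv
    have hsub : Set.uIcc u v ⊆ Set.Ici (0:ℝ) := by
      rw [uIcc_of_le huv]
      exact fun s hs => le_trans hu hs.1
    exact (hf_cont.mono hsub).intervalIntegrable
  have hinta : ∀ u v : ℝ, 0 ≤ u → u ≤ v → IntervalIntegrable a MeasureTheory.volume u v := by
    intro u v hu huv
    have hsub : Set.uIcc u v ⊆ Set.Ici (0:ℝ) := by
      rw [uIcc_of_le huv]
      exact fun s hs => le_trans hu hs.1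
    exact (ha_cont.mono hsub).intervalIntegrable
  have hintax : ∀ u v : ℝ, 0 ≤ u → u ≤ v →
      IntervalIntegrable (fun s => a s * x s) MeasureTheory.volume u v := by
    intro u v hu huv
    have hsub : Set.uIcc u v ⊆ Set.Ici (0:ℝ) := by
      rw [uIcc_of_le huv]
      exact fun s hs => le_trans hu hs.1
    exact ((ha_cont.mul hx_cont).mono hsub).intervalIntegrable
  -- extract δ from (H₁)
  have hAbdd : IsBoundedUnder (· ≥ ·) atTop (fun t => ∫ s in t..(t + γ), a s) := by
    refine ⟨0, ?_⟩
    rw [Filter.eventually_map]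
    filter_upwards [Filter.eventually_ge_atTop (0:ℝ)] with t ht
    refine intervalIntegral.integral_nonneg (by linarith) (fun u hu => ha_nonneg u ?_)
    have := hu.1; linarith
  set L := Filter.liminf (fun t => ∫ s in t..(t + γ), a s) Filter.atTop with hLdef
  have hδev : ∀ᶠ t in atTop, L/2 < ∫ s in t..(t + γ), a s :=
    Filter.eventually_lt_of_lt_liminf (by linarith) hAbdd
  set δ : ℝ := L/2 with hδdef
  have hδ : 0 < δ := by rw [hδdef]; linarith
  obtain ⟨T₂₀, hT₂⟩ := Filter.eventually_atTop.1 hδev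
  set T₂ := max T₂₀ 0 with hT₂def
  have hwinA : ∀ t ≥ T₂, δ ≤ ∫ s in t..(t + γ), a s := fun t ht =>
    (hT₂ t (le_trans (le_max_left _ _) ht)).le
  -- extract η-window bound from (H₃)
  set η : ℝ := ε*δ*lam/(4*γ) with hηdef
  have hη : 0 < η := by rw [hηdef]; positivity
  have hFbdd : IsBoundedUnder (· ≤ ·) atTop (fun t => ∫ s in t..(t + lam), f s) := by
    refine ⟨Cf * lam, ?_⟩
    rw [Filter.eventually_map]
    filter_upwards [Filter.eventually_ge_atTop (0:ℝ)] with t ht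
    have hnorm := intervalIntegral.norm_integral_le_of_norm_le_const (C := Cf)
      (f := f) (a := t) (b := t + lam) (fun s hs => by
        rw [Set.uIoc_of_le (by linarith : t ≤ t + lam)] at hs
        rw [Real.norm_eq_abs]
        exact hCf s (by linarith [hs.1]))
    rw [Real.norm_eq_abs] at hnorm
    have h1 : (∫ s in t..(t + lam), f s) ≤ |∫ s in t..(t + lam), f s| := le_abs_self _
    have h2 : |t + lam - t| = lam := by rw [add_sub_cancel_left, abs_of_pos hlam]
    rw [h2] at hnorm
    linarith
  have hηev : ∀ᶠ t in atTop, (∫ s in t..(t + lam), f s) < η :=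
    Filter.eventually_lt_of_limsup_lt (by linarith) hFbdd
  obtain ⟨T₃₀, hT₃⟩ := Filter.eventually_atTop.1 hηev
  set T₃ := max T₃₀ 0 with hT₃def
  have hwinF : ∀ t ≥ T₃, (∫ s in t..(t + lam), f s) ≤ η := fun t ht =>
    (hT₃ t (le_trans (le_max_left _ _) ht)).le
  -- M bound
  set η' : ℝ := ε*δ/(4*γ) with hη'def
  have hη' : 0 < η' := by rw [hη'def]; positivity
  have hMev : ∀ᶠ t in atTop, |M t / t| < η' := by
    have h := Metric.tendsto_nhds.1 hM η' hη'
    filter_upwards [h] with t ht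
    rwa [Real.dist_eq, sub_zero] at ht
  obtain ⟨T₄₀, hT₄⟩ := Filter.eventually_atTop.1 hMev
  set T₄ := max T₄₀ 1 with hT₄def
  have hMb : ∀ t ≥ T₄, |M t| ≤ η' * t := by
    intro t ht
    have ht1 : (1:ℝ) ≤ t := le_trans (le_max_right _ _) ht
    have h := hT₄ t (le_trans (le_max_left _ _) ht)
    have ht0 : 0 < t := by linarith
    rw [abs_div, div_lt_iff₀ (by rw [abs_of_pos ht0]; exact ht0)] at h
    rw [abs_of_pos ht0] at h
    linarith
  -- the base point
  set T : ℝ := max (max T₁ T₂) (max T₃ T₄) with hTdef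
  have hTT₁ : T₁ ≤ T := le_trans (le_max_left _ _) (le_max_left _ _)
  have hTT₂ : T₂ ≤ T := le_trans (le_max_right _ _) (le_max_left _ _)
  have hTT₃ : T₃ ≤ T := le_trans (le_max_left _ _) (le_max_right _ _)
  have hTT₄ : T₄ ≤ T := le_trans (le_max_right _ _) (le_max_right _ _)
  have hT0 : 0 ≤ T := le_trans hT₁ hTT₁
  -- core estimate for t_n = T + n γ
  have hcore : ∀ n : ℕ, Real.log (x (T + n*γ)) ≤
      Real.log (x T) + Cf*lam + 2*η'*T - (ε*δ/2) * n := by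
    intro n
    have hnγ : 0 ≤ (n:ℝ)*γ := mul_nonneg n.cast_nonneg hγ.le
    have htn : T ≤ T + n*γ := by linarith
    have hlog := heq T (T + n*γ) hT0 htn
    -- split the integrand
    have hsub : (∫ s in T..(T + n*γ), (f s - a s * x s)) =
        (∫ s in T..(T + n*γ), f s) - ∫ s in T..(T + n*γ), a s * x s :=
      intervalIntegral.integral_sub (hintf _ _ hT0 htn) (hintax _ _ hT0 htn)
    -- lower bound for ∫ a x
    have hax1 : ε * (∫ s in T..(T + n*γ), a s) ≤ ∫ s in T..(T + n*γ), a s * x s := by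
      rw [← intervalIntegral.integral_const_mul]
      refine intervalIntegral.integral_mono_on htn
        ((hinta _ _ hT0 htn).const_mul ε) (hintax _ _ hT0 htn) (fun s hs => ?_)
      have hs0 : 0 ≤ s := le_trans hT0 hs.1
      have h1 := hxε s (le_trans hTT₁ hs.1)
      have h2 := ha_nonneg s hs0
      nlinarith
    have hax2 : (n:ℝ) * δ ≤ ∫ s in T..(T + n*γ), a s := by
      have h := stmt_8_sum_windows (g := fun s => -a s) (T := T) (γ := γ) (η := -δ)
        (fun u v hu huv => (hinta u v (le_trans hT0 hu) huv).neg)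
        hγ.le
        (fun t ht => by
          have hw := hwinA t (le_trans hTT₂ ht)
          rw [intervalIntegral.integral_neg]
          linarith) n
      rw [intervalIntegral.integral_neg] at h
      have : -(∫ s in T..(T + n*γ), a s) ≤ n * (-δ) := h
      nlinarith
    -- upper bound for ∫ f
    have hf1 : (∫ s in T..(T + n*γ), f s) ≤ η * ((n:ℝ)*γ/lam) + Cf * lam := by
      set k : ℕ := ⌊((n:ℝ)*γ/lam : ℝ)⌋₊ with hkdef
      have hk1 : (k:ℝ) ≤ (n:ℝ)*γ/lam := Nat.floor_le (by positivity)
      have hk2 : ((n:ℝ)*γ/lam : ℝ) < k + 1 := Nat.lt_floor_add_one _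
      have hklam : (k:ℝ)*lam ≤ (n:ℝ)*γ := by
        rw [le_div_iff₀ hlam] at hk1
        linarith
      have hrem : (n:ℝ)*γ - (k:ℝ)*lam < lam := by
        rw [div_lt_iff₀ hlam] at hk2
        nlinarith
      have hm1 : T ≤ T + k*lam := by
        have : 0 ≤ (k:ℝ)*lam := mul_nonneg k.cast_nonneg hlam.le
        linarith
      have hm2 : T + k*lam ≤ T + n*γ := by linarith
      have hsplit := intervalIntegral.integral_add_adjacent_intervals
        (a := T) (b := T + k*lam) (c := T + n*γ)
        (hintf _ _ hT0 hm1) (hintf _ _ (le_trans hT0 hm1) hm2)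
      have hpart1 : (∫ s in T..(T + k*lam), f s) ≤ k * η :=
        stmt_8_sum_windows (fun u v hu huv => hintf u v (le_trans hT0 hu) huv)
          hlam.le (fun t ht => hwinF t (le_trans hTT₃ ht)) k
      have hpart2 : (∫ s in (T + k*lam)..(T + n*γ), f s) ≤ Cf * lam := by
        have hnorm := intervalIntegral.norm_integral_le_of_norm_le_const (C := Cf)
          (f := f) (a := T + k*lam) (b := T + n*γ)
          (fun s hs => by
            rw [Set.uIoc_of_le hm2] at hs
            rw [Real.norm_eq_abs]
            refine hCf s ?_
            have := hs.1
            have h0 : 0 ≤ T + k*lam := le_trans hT0 hm1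
            linarith)
        rw [Real.norm_eq_abs] at hnorm
        have h1 : (∫ s in (T + k*lam)..(T + n*γ), f s)
            ≤ |∫ s in (T + k*lam)..(T + n*γ), f s| := le_abs_self _
        have h2 : |T + (n:ℝ)*γ - (T + k*lam)| ≤ lam := by
          rw [abs_of_nonneg (by linarith)]
          linarith
        nlinarith [abs_nonneg (∫ s in (T + k*lam)..(T + n*γ), f s)]
      have hkη : (k:ℝ) * η ≤ ((n:ℝ)*γ/lam) * η := by nlinarith
      calc (∫ s in T..(T + n*γ), f s)
          = (∫ s in T..(T + k*lam), f s) + ∫ s in (T + k*lam)..(T + n*γ), f s := hsplit.symm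
        _ ≤ (k:ℝ)*η + Cf*lam := add_le_add hpart1 hpart2
        _ ≤ η * ((n:ℝ)*γ/lam) + Cf*lam := by nlinarith
    -- M bounds
    have habs1 := abs_le.1 (hMb T hTT₄)
    have habs2 := abs_le.1 (hMb _ (le_trans hTT₄ htn))
    -- combine
    have hηγ : η * ((n:ℝ)*γ/lam) = ε*δ/4 * n := by
      rw [hηdef]; field_simp
    have hη'n : η' * (T + (n:ℝ)*γ) = η'*T + ε*δ/4 * n := by
      rw [hη'def]; field_simp
    nlinarith [hlog, hsub, hax1, hax2, hf1, habs1.1, habs1.2, habs2.1, habs2.2]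
  -- choose n large to contradict x ≥ ε
  obtain ⟨n, hn⟩ := exists_nat_gt ((Real.log (x T) + Cf*lam + 2*η'*T - Real.log ε) / (ε*δ/2))
  have hnγ : 0 ≤ (n:ℝ)*γ := mul_nonneg n.cast_nonneg hγ.le
  have hlogε : Real.log ε ≤ Real.log (x (T + n*γ)) :=
    Real.log_le_log hε (hxε _ (by linarith [hTT₁]))
  have hc := hcore n
  rw [div_lt_iff₀ (by positivity)] at hn
  linarith

/-- Pathwise extinction claim (T3.3) in the proof of Theorem 4.1: under (H₁) and (H₃),
along each path satisfying the logistic relation one has `liminf_{t→∞} x(t) = 0`. -/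
theorem stmt_8 (f a x M : ℝ → ℝ)
    (hf_cont : ContinuousOn f (Set.Ici (0 : ℝ)))
    (ha_cont : ContinuousOn a (Set.Ici (0 : ℝ)))
    (hf_bdd : ∃ C : ℝ, ∀ t ≥ (0 : ℝ), |f t| ≤ C)
    (ha_bdd : ∃ C : ℝ, ∀ t ≥ (0 : ℝ), |a t| ≤ C)
    (ha_nonneg : ∀ s ≥ (0 : ℝ), 0 ≤ a s)
    (hx_pos : ∀ t ≥ (0 : ℝ), 0 < x t)
    (hx_cont : ContinuousOn x (Set.Ici (0 : ℝ)))
    (hM : Filter.Tendsto (fun t => M t / t) Filter.atTop (nhds 0))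
    (heq : ∀ t₁ t₂ : ℝ, 0 ≤ t₁ → t₁ ≤ t₂ →
      Real.log (x t₂) - Real.log (x t₁)
        = (∫ s in t₁..t₂, (f s - a s * x s)) + (M t₂ - M t₁))
    (hH1 : ∃ γ > (0 : ℝ),
      0 < Filter.liminf (fun t => ∫ s in t..(t + γ), a s) Filter.atTop)
    (hH3 : ∃ lam > (0 : ℝ),
      Filter.limsup (fun t => ∫ s in t..(t + lam), f s) Filter.atTop ≤ 0) :
    Filter.liminf x Filter.atTop = 0 := by
  rw [Filter.liminf_eq]
  set S : Set ℝ := {c | ∀ᶠ t in atTop, c ≤ x t} with hSdef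
  by_cases hbdd : BddAbove S
  · have h0S : (0:ℝ) ∈ S := by
      rw [hSdef]
      refine Set.mem_setOf.2 ?_
      filter_upwards [Filter.eventually_ge_atTop (0:ℝ)] with t ht
      exact (hx_pos t ht).le
    have hne : S.Nonempty := ⟨0, h0S⟩
    have h0le : (0:ℝ) ≤ sSup S := le_csSup hbdd h0S
    rcases eq_or_lt_of_le h0le with h | h
    · exact h.symm
    · exfalso
      obtain ⟨c, hcS, hc⟩ := (lt_csSup_iff hbdd hne).1 (by linarith : sSup S / 2 < sSup S)
      have hc0 : 0 < c := lt_of_le_of_lt (by linarith) hc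
      obtain ⟨T₁₀, hT₁⟩ := Filter.eventually_atTop.1 hcS
      exact stmt_8_key f a x M hf_cont ha_cont hf_bdd ha_nonneg hx_pos hx_cont hM heq
        hH1 hH3 c hc0 (max T₁₀ 0) (le_max_right _ _)
        (fun t ht => hT₁ t (le_trans (le_max_left _ _) ht))
  · exact Real.sSup_of_not_bddAbove hbdd
end

section
/- Let a : [0,∞) → [0,∞) be continuous with ∫₀^∞ a(s) ds = ∞. Let x, y : [0,∞) → ℝ be differentiable functions and suppose there are constants 0 < m ≤ M such that m ≤ x(t) ≤ M and m ≤ y(t) ≤ M for all t ≥ 0, and that the function u(t) = ln x(t) − ln y(t) satisfies u'(t) = −a(t)(x(t) − y(t)) for all t ≥ 0. Then x(t) − y(t) → 0 as t → ∞. (This is the deterministic pathwise core of the proof of Theorem 5.1 of the paper on global attractivity of the stochastic logistic equation.) -/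
/-!
Since `log` is increasing, `u = log x - log y` has the sign of `x - y`, and on `[m, M]` the
elementary bounds on `log` give `m |u| ≤ |x - y| ≤ M |u|`. Hence `(u²)' = -2 a u (x - y) ≤ -2 m a u²`,
so `u² · exp (2 m ∫₀ᵗ a)` is nonincreasing and `u(t)² ≤ u(0)² exp (-2 m ∫₀ᵗ a) → 0`.
-/

open Filter Set intervalIntegral Real Topology

theorem log_sub_log_le_sub_div {p q : ℝ} (hp : 0 < p) (hq : 0 < q) :
    log p - log q ≤ (p - q) / q := by
  have h := log_le_sub_one_of_pos (div_pos hp hq)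
  rwa [log_div hp.ne' hq.ne', div_sub_one hq.ne'] at h

theorem mul_sq_log_sub_log_le {m p q : ℝ} (hm : 0 < m) (hp : m ≤ p) (hq : m ≤ q) :
    m * (log p - log q) ^ 2 ≤ (log p - log q) * (p - q) := by
  wlog hqp : q ≤ p generalizing p q
  · have := this hq hp (le_of_not_ge hqp)
    linarith
  have hu : 0 ≤ log p - log q := sub_nonneg.2 (log_le_log (hm.trans_le hq) hqp)
  have hmu : m * (log p - log q) ≤ p - q := by
    have := log_sub_log_le_sub_div (hm.trans_le hp) (hm.trans_le hq)
    rw [le_div_iff₀ (hm.trans_le hq)] at this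
    nlinarith
  nlinarith

theorem abs_sub_le_mul_abs_log_sub_log {M p q : ℝ} (hp : 0 < p) (hq : 0 < q) (hpM : p ≤ M)
    (hqM : q ≤ M) : |p - q| ≤ M * |log p - log q| := by
  wlog hqp : q ≤ p generalizing p q
  · rw [abs_sub_comm, abs_sub_comm (log p)]
    exact this hq hp hqM hpM (le_of_not_ge hqp)
  have hlog : 0 ≤ log p - log q := sub_nonneg.2 (log_le_log hq hqp)
  have hpq : p - q ≤ p * (log p - log q) := by
    have := log_sub_log_le_sub_div hq hp
    rw [le_div_iff₀ hp] at this
    linarith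
  rw [abs_of_nonneg (sub_nonneg.2 hqp), abs_of_nonneg hlog]
  exact hpq.trans (mul_le_mul_of_nonneg_right hpM hlog)

theorem antitoneOn_mul_exp_of_hasDerivAt {s : Set ℝ} (hs : Convex ℝ s) {v v' A b : ℝ → ℝ}
    (hv : ∀ t ∈ s, HasDerivAt v (v' t) t) (hA : ∀ t ∈ s, HasDerivAt A (b t) t)
    (hle : ∀ t ∈ s, v' t ≤ -(b t * v t)) :
    AntitoneOn (fun t => v t * exp (A t)) s := by
  have hd : ∀ t ∈ s, HasDerivAt (fun t => v t * exp (A t))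
      (v' t * exp (A t) + v t * (exp (A t) * b t)) t :=
    fun t ht => (hv t ht).mul (hA t ht).exp
  refine antitoneOn_of_hasDerivWithinAt_nonpos hs
    (fun t ht => (hd t ht).continuousAt.continuousWithinAt)
    (fun t ht => (hd t (interior_subset ht)).hasDerivWithinAt) fun t ht => ?_
  nlinarith [hle t (interior_subset ht), exp_pos (A t)]

theorem tendsto_nhds_zero_of_antitoneOn_mul_exp {v A : ℝ → ℝ} {t₀ : ℝ}
    (hv : ∀ t ≥ t₀, 0 ≤ v t) (hA : Tendsto A atTop atTop)
    (hanti : AntitoneOn (fun t => v t * exp (A t)) (Ici t₀)) :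
    Tendsto v atTop (𝓝 0) := by
  have hbound : ∀ t ≥ t₀, v t ≤ v t₀ * exp (A t₀) * exp (-A t) := fun t ht => by
    rw [exp_neg, ← div_eq_mul_inv, le_div_iff₀ (exp_pos _)]
    exact hanti self_mem_Ici ht ht
  have hdecay : Tendsto (fun t => v t₀ * exp (A t₀) * exp (-A t)) atTop (𝓝 0) := by
    simpa using (tendsto_exp_neg_atTop_nhds_zero.comp hA).const_mul (v t₀ * exp (A t₀))
  exact tendsto_of_tendsto_of_tendsto_of_le_of_le' tendsto_const_nhds hdecay
    (eventually_ge_atTop t₀ |>.mono hv) (eventually_ge_atTop t₀ |>.mono hbound)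

theorem ContinuousOn.exists_hasDerivAt_eqOn_integral {a : ℝ → ℝ} {t₀ : ℝ}
    (ha : ContinuousOn a (Ici t₀)) :
    ∃ A : ℝ → ℝ, (∀ t ≥ t₀, HasDerivAt A (a t) t) ∧
      EqOn A (fun t => ∫ s in t₀..t, a s) (Ici t₀) := by
  have hb : Continuous fun s => a (max s t₀) :=
    ha.comp_continuous (continuous_id.max continuous_const) fun s => le_max_right s t₀
  refine ⟨fun t => ∫ s in t₀..t, a (max s t₀), fun t ht => ?_, fun t ht => ?_⟩
  · simpa [max_eq_left ht] using (hb.integral_hasStrictDerivAt t₀ t).hasDerivAt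
  · refine integral_congr fun s hs => ?_
    rw [uIcc_of_le ht] at hs
    simp [max_eq_left hs.1]

theorem stmt_9_general (a x y : ℝ → ℝ) (m M : ℝ)
    (ha_cont : ContinuousOn a (Set.Ici (0 : ℝ)))
    (ha_nonneg : ∀ s ≥ (0 : ℝ), 0 ≤ a s)
    (ha_div : Filter.Tendsto (fun t => ∫ s in (0 : ℝ)..t, a s)
      Filter.atTop Filter.atTop)
    (hm : 0 < m)
    (hx_bdd : ∀ t ≥ (0 : ℝ), m ≤ x t ∧ x t ≤ M)
    (hy_bdd : ∀ t ≥ (0 : ℝ), m ≤ y t ∧ y t ≤ M)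
    (hu : ∀ t ≥ (0 : ℝ),
      HasDerivAt (fun s => Real.log (x s) - Real.log (y s))
        (-(a t) * (x t - y t)) t) :
    Filter.Tendsto (fun t => x t - y t) Filter.atTop (nhds 0) := by
  obtain ⟨A, hA, hA_eq⟩ := ha_cont.exists_hasDerivAt_eqOn_integral
  have hA_top : Tendsto A atTop atTop :=
    ha_div.congr' (eventuallyEq_of_mem (Ici_mem_atTop 0) hA_eq).symm
  set u := fun s => log (x s) - log (y s)
  have hu_sq : Tendsto (fun t => u t ^ 2) atTop (𝓝 0) := by
    refine tendsto_nhds_zero_of_antitoneOn_mul_exp (fun t _ => sq_nonneg (u t))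
      (hA_top.const_mul_atTop (by positivity : 0 < 2 * m))
      (antitoneOn_mul_exp_of_hasDerivAt (convex_Ici 0) (fun t ht => (hu t ht).pow 2)
        (fun t ht => (hA t ht).const_mul (2 * m)) fun t ht => ?_)
    have := mul_sq_log_sub_log_le hm (hx_bdd t ht).1 (hy_bdd t ht).1
    simp only [u, Nat.cast_ofNat, Nat.reduceSub, pow_one]
    nlinarith [ha_nonneg t ht]
  have hu_abs : Tendsto (fun t => |u t|) atTop (𝓝 0) := by
    simpa [sqrt_sq_eq_abs] using hu_sq.sqrt
  refine squeeze_zero_norm' ?_ (by simpa using hu_abs.const_mul M)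
  filter_upwards [eventually_ge_atTop 0] with t ht
  exact abs_sub_le_mul_abs_log_sub_log (hm.trans_le (hx_bdd t ht).1)
    (hm.trans_le (hy_bdd t ht).1) (hx_bdd t ht).2 (hy_bdd t ht).2

/-- Deterministic core of Theorem 5.1 (global attractivity): if `a ≥ 0` is continuous on
`[0,∞)` with divergent integral, `x, y` are differentiable, trapped in `[m, M] ⊂ (0,∞)`,
and `u(t) = ln x(t) − ln y(t)` satisfies `u'(t) = −a(t)(x(t) − y(t))`, then
`x(t) − y(t) → 0` as `t → ∞`. -/
theorem stmt_9 (a x y : ℝ → ℝ) (m M : ℝ)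
    (ha_cont : ContinuousOn a (Set.Ici (0 : ℝ)))
    (ha_nonneg : ∀ s ≥ (0 : ℝ), 0 ≤ a s)
    (ha_div : Filter.Tendsto (fun t => ∫ s in (0 : ℝ)..t, a s)
      Filter.atTop Filter.atTop)
    (hx_diff : ∀ t ≥ (0 : ℝ), DifferentiableAt ℝ x t)
    (hy_diff : ∀ t ≥ (0 : ℝ), DifferentiableAt ℝ y t)
    (hm : 0 < m) (hmM : m ≤ M)
    (hx_bdd : ∀ t ≥ (0 : ℝ), m ≤ x t ∧ x t ≤ M)
    (hy_bdd : ∀ t ≥ (0 : ℝ), m ≤ y t ∧ y t ≤ M)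
    (hu : ∀ t ≥ (0 : ℝ),
      HasDerivAt (fun s => Real.log (x s) - Real.log (y s))
        (-(a t) * (x t - y t)) t) :
    Filter.Tendsto (fun t => x t - y t) Filter.atTop (nhds 0) :=
  stmt_9_general a x y m M ha_cont ha_nonneg ha_div hm hx_bdd hy_bdd hu
end

section
/- Let f : [0,∞) → ℝ be a bounded continuous function and λ > 0. If limsup_{t→∞} ∫_t^{t+λ} f(s) ds ≤ 0, then limsup_{t→∞} (1/t) ∫_0^t f(s) ds ≤ 0. (This fact is used in the paper to show that its windowed-average extinction condition (H₃) implies the Cesàro-average condition of Liu and Wang.) -/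
open Filter MeasureTheory Set intervalIntegral

/-- If `limsup_{t→∞} ∫_t^{t+λ} f ≤ 0` for some `λ > 0`, then
`limsup_{t→∞} (1/t) ∫_0^t f ≤ 0`. -/
theorem stmt_10 (f : ℝ → ℝ) (lam : ℝ) (hlam : 0 < lam)
    (hf_cont : ContinuousOn f (Set.Ici (0 : ℝ)))
    (hf_bdd : ∃ C : ℝ, ∀ t ≥ (0 : ℝ), |f t| ≤ C)
    (h : Filter.limsup (fun t => ∫ s in t..(t + lam), f s) Filter.atTop ≤ 0) :
    Filter.limsup (fun t => (1 / t) * ∫ s in (0 : ℝ)..t, f s) Filter.atTop ≤ 0 := by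
  obtain ⟨C, hC⟩ := hf_bdd
  have hC0 : 0 ≤ C := le_trans (abs_nonneg _) (hC 0 le_rfl)
  -- integrability on nonnegative intervals
  have hint : ∀ a b : ℝ, 0 ≤ a → 0 ≤ b → IntervalIntegrable f volume a b := by
    intro a b ha hb
    apply (hf_cont.mono ?_).intervalIntegrable
    intro x hx
    have := hx.1
    have hm : min a b ≤ x := hx.1
    have : (0:ℝ) ≤ min a b := le_min ha hb
    exact le_trans this hm
  -- integral bound
  have hbound : ∀ a b : ℝ, 0 ≤ a → 0 ≤ b → |∫ s in a..b, f s| ≤ C * |b - a| := by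
    intro a b ha hb
    have := intervalIntegral.norm_integral_le_of_norm_le_const (C := C) (f := f)
      (a := a) (b := b) ?_
    · simpa [Real.norm_eq_abs] using this
    · intro x hx
      have hm : min a b < x := hx.1
      have h0 : (0:ℝ) ≤ x := le_of_lt (lt_of_le_of_lt (le_min ha hb) hm)
      simpa [Real.norm_eq_abs] using hC x h0
  -- coboundedness of the Cesàro averages
  have hcob : IsCoboundedUnder (· ≤ ·) atTop
      (fun t => (1 / t) * ∫ s in (0:ℝ)..t, f s) := by
    apply isCoboundedUnder_le_of_eventually_le atTop (x := -C)
    filter_upwards [eventually_ge_atTop (1:ℝ)] with t ht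
    have ht0 : (0:ℝ) < t := lt_of_lt_of_le one_pos ht
    have hb := hbound 0 t le_rfl (le_of_lt ht0)
    rw [sub_zero, abs_of_pos ht0] at hb
    have h1 : -(C * t) ≤ ∫ s in (0:ℝ)..t, f s := neg_le_of_abs_le hb
    have h2 : (0:ℝ) ≤ 1 / t := by positivity
    have heq : -C = (1/t) * (-(C*t)) := by field_simp
    rw [heq]
    exact mul_le_mul_of_nonneg_left h1 h2
  -- main estimate: for every ε > 0, eventually the average is ≤ ε
  have main : ∀ ε : ℝ, 0 < ε → ∀ᶠ t in atTop,
      (1 / t) * (∫ s in (0:ℝ)..t, f s) ≤ ε := by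
    intro ε hε
    set ε₀ : ℝ := ε * lam / 2 with hε₀def
    have hε₀ : 0 < ε₀ := by positivity
    -- windows eventually small
    have hgb : IsBoundedUnder (· ≤ ·) atTop (fun t => ∫ s in t..(t + lam), f s) := by
      refine ⟨C * lam, ?_⟩
      rw [eventually_map]
      filter_upwards [eventually_ge_atTop (0:ℝ)] with t ht
      have hb := hbound t (t + lam) ht (by linarith)
      have : |t + lam - t| = lam := by rw [add_sub_cancel_left, abs_of_pos hlam]
      rw [this] at hb
      exact le_of_abs_le hb
    have hev : ∀ᶠ t in atTop, (∫ s in t..(t + lam), f s) < ε₀ :=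
      eventually_lt_of_limsup_lt (lt_of_le_of_lt h hε₀) hgb
    obtain ⟨T₀, hT₀⟩ := eventually_atTop.1 hev
    set T : ℝ := max T₀ 0 with hTdef
    have hT0 : (0:ℝ) ≤ T := le_max_right _ _
    have hwin : ∀ s : ℝ, T ≤ s → (∫ x in s..(s + lam), f x) ≤ ε₀ :=
      fun s hs => le_of_lt (hT₀ s (le_trans (le_max_left _ _) hs))
    -- induction over windows
    have key : ∀ n : ℕ, (∫ s in T..(T + n * lam), f s) ≤ n * ε₀ := by
      intro n
      induction n with
      | zero => simp
      | succ n ih =>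
        have hadd : (∫ s in T..(T + n * lam), f s)
            + (∫ s in (T + n * lam)..(T + (n + 1) * lam), f s)
            = ∫ s in T..(T + (n + 1) * lam), f s := by
          apply intervalIntegral.integral_add_adjacent_intervals
          · exact hint _ _ hT0 (by positivity)
          · exact hint _ _ (by positivity) (by positivity)
        have hw : (∫ s in (T + n * lam)..(T + (n + 1) * lam), f s) ≤ ε₀ := by
          have heq : T + ((n:ℝ) + 1) * lam = (T + (n:ℝ) * lam) + lam := by ring
          rw [heq]
          exact hwin _ (le_add_of_nonneg_right (by positivity))
        push_cast
        push_cast at hadd hw ih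
        linarith
    set A : ℝ := ∫ s in (0:ℝ)..T, f s with hAdef
    have hB : (0:ℝ) ≤ |A| + ε₀ + C * lam := by positivity
    filter_upwards [eventually_ge_atTop (max 1 (max T (2 * (|A| + ε₀ + C * lam) / ε)))]
      with t ht
    have ht1 : (1:ℝ) ≤ t := le_trans (le_max_left _ _) ht
    have htT : T ≤ t := le_trans (le_trans (le_max_left _ _) (le_max_right _ _)) ht
    have htS : 2 * (|A| + ε₀ + C * lam) / ε ≤ t :=
      le_trans (le_trans (le_max_right _ _) (le_max_right _ _)) ht
    have ht0 : (0:ℝ) < t := lt_of_lt_of_le one_pos ht1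
    -- choose n
    set n : ℕ := ⌈(t - T) / lam⌉₊ with hndef
    have hfrac0 : (0:ℝ) ≤ (t - T) / lam := by
      apply div_nonneg (by linarith) (le_of_lt hlam)
    have hn1 : (t - T) / lam ≤ (n : ℝ) := Nat.le_ceil _
    have hn2 : (n : ℝ) < (t - T) / lam + 1 := Nat.ceil_lt_add_one hfrac0
    have hnl1 : t - T ≤ n * lam := by
      rw [div_le_iff₀ hlam] at hn1; linarith
    have hnl2 : (n:ℝ) * lam < t - T + lam := by
      have h' := mul_lt_mul_of_pos_right hn2 hlam
      rwa [add_mul, one_mul, div_mul_cancel₀ _ (ne_of_gt hlam)] at h'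
    -- decompose the integral
    have hd1 : (∫ s in (0:ℝ)..T, f s) + (∫ s in T..t, f s) = ∫ s in (0:ℝ)..t, f s :=
      intervalIntegral.integral_add_adjacent_intervals
        (hint _ _ le_rfl hT0) (hint _ _ hT0 (le_of_lt ht0))
    have hd2 : (∫ s in T..t, f s) + (∫ s in t..(T + n * lam), f s)
        = ∫ s in T..(T + n * lam), f s :=
      intervalIntegral.integral_add_adjacent_intervals
        (hint _ _ hT0 (le_of_lt ht0)) (hint _ _ (le_of_lt ht0) (by positivity))
    have htail : |∫ s in t..(T + n * lam), f s| ≤ C * lam := by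
      have hb := hbound t (T + n * lam) (le_of_lt ht0) (by positivity)
      have habs : |T + n * lam - t| ≤ lam := by
        rw [abs_le]; constructor <;> [linarith; linarith]
      calc |∫ s in t..(T + n * lam), f s| ≤ C * |T + n * lam - t| := hb
        _ ≤ C * lam := by nlinarith
    have hkey := key n
    have hIle : (∫ s in (0:ℝ)..t, f s) ≤ A + n * ε₀ + C * lam := by
      have h1 : (∫ s in T..t, f s) ≤ n * ε₀ + C * lam := by
        have := neg_le_of_abs_le htail
        linarith
      linarith
    -- n * ε₀ ≤ (t + lam) * ε / 2
    have hnε : (n:ℝ) * ε₀ ≤ (t + lam) * ε / 2 := by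
      rw [hε₀def]
      have hnl : (n:ℝ) * lam ≤ t + lam := by linarith
      nlinarith
    have hIle2 : (∫ s in (0:ℝ)..t, f s) ≤ |A| + C * lam + (t + lam) * ε / 2 := by
      have : A ≤ |A| := le_abs_self A
      linarith
    -- conclude
    rw [one_div, ← div_eq_inv_mul, div_le_iff₀ ht0]
    have hεt : 2 * (|A| + ε₀ + C * lam) ≤ ε * t := by
      rw [div_le_iff₀ hε] at htS; linarith
    have hlamε : lam * ε ≤ 2 * ε₀ := by rw [hε₀def]; ring_nf; linarith [le_refl (ε * lam)]
    nlinarith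
  -- from eventual bounds to the limsup bound
  have hl : ∀ ε : ℝ, 0 < ε →
      limsup (fun t => (1 / t) * ∫ s in (0:ℝ)..t, f s) atTop ≤ ε :=
    fun ε hε => limsup_le_of_le hcob (main ε hε)
  exact le_of_forall_pos_le_add fun ε hε => (by rw [zero_add]; exact hl ε hε)
end

section
/- Let b, a : [0,∞) → ℝ be bounded continuous functions with a(s) ≥ 0 for all s ≥ 0, and suppose there exists γ > 0 such that liminf_{t→∞} ∫_t^{t+γ} a(s) ds > 0. Then there exists a constant M > 0 such that every differentiable function z : [0,∞) → (0,∞) satisfying z'(t) = z(t)(b(t) − a(t)z(t)) for all t ≥ 0 obeys limsup_{t→∞} z(t) ≤ M. (This ultimate-boundedness property of the nonautonomous logistic ODE, Lemma 1 of Teng and Li, is the key ingredient in the proof of Theorem 3.1 of the paper; note that M is uniform over all positive solutions.) -/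
/-!
Work with `u = log z`, whose derivative `b - a z` is at most `C := sup b`. Far out, every window
`[t, t + γ]` carries `∫ a ≥ α > 0`. If `z ≥ M := (1 + Cγ)/α` on the whole window, then `u` drops
by at least `Cγ - Mα = 1` across it; otherwise `z < M` somewhere in it and `u(t + γ) ≤ log M + Cγ`.
So `u(t + γ) ≤ max (log M + Cγ) (u t - 1)`, which forces `u ≤ log M + Cγ` after finitely many
windows, with a bound independent of the solution.
-/

open Filter MeasureTheory Set intervalIntegral Real

theorem eventually_le_of_le_max_sub_one {g : ℝ → ℝ} {γ T m : ℝ} (hγ : 0 < γ)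
    (hstep : ∀ t ≥ T, g (t + γ) ≤ max m (g t - 1)) (hbdd : BddAbove (g '' Icc T (T + γ))) :
    ∀ᶠ t in atTop, g t ≤ m := by
  obtain ⟨K, hK⟩ := hbdd
  have hiter : ∀ n : ℕ, ∀ s ∈ Icc T (T + γ), g (s + n * γ) ≤ max m (K - n) := by
    intro n s hs
    induction n with
    | zero => simpa using le_max_of_le_right (hK (mem_image_of_mem g hs))
    | succ n ih =>
      have hstep' := hstep (s + n * γ) (by nlinarith [hs.1, n.cast_nonneg (α := ℝ)])
      rw [add_assoc, ← add_one_mul] at hstep'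
      push_cast
      calc g (s + (n + 1) * γ) ≤ max m (max m (K - n) - 1) := hstep'.trans (by gcongr)
        _ ≤ max m (K - (n + 1)) := by grind
  obtain ⟨N, hN⟩ := exists_nat_gt (K - m)
  filter_upwards [eventually_ge_atTop (T + N * γ)] with t ht
  have hTt : T ≤ t := (le_add_of_nonneg_right (by positivity)).trans ht
  set n := ⌊(t - T) / γ⌋₊
  have hNn : N ≤ n := Nat.le_floor ((le_div_iff₀ hγ).2 (by linarith))
  have hn_le : n * γ ≤ t - T :=
    (le_div_iff₀ hγ).1 (Nat.floor_le (div_nonneg (sub_nonneg.2 hTt) hγ.le))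
  have hlt_n : t - T < (n + 1) * γ := (div_lt_iff₀ hγ).1 (Nat.lt_floor_add_one _)
  have := hiter n (t - n * γ) ⟨by linarith, by linarith⟩
  rw [sub_add_cancel] at this
  exact this.trans (max_le le_rfl (by linarith [(Nat.cast_le (α := ℝ)).2 hNn]))


structure IsPosLogisticSolution (b a z : ℝ → ℝ) : Prop where
  pos : ∀ t ≥ 0, 0 < z t
  hasDerivAt : ∀ t ≥ 0, HasDerivAt z (z t * (b t - a t * z t)) t

namespace IsPosLogisticSolution

variable {b a z : ℝ → ℝ} {C M s t γ : ℝ}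

theorem hasDerivAt_log (hz : IsPosLogisticSolution b a z) (ht : 0 ≤ t) :
    HasDerivAt (fun x => log (z x)) (b t - a t * z t) t := by
  simpa only [mul_div_cancel_left₀ _ (hz.pos t ht).ne'] using
    (hz.hasDerivAt t ht).log (hz.pos t ht).ne'

theorem continuousOn_log (hz : IsPosLogisticSolution b a z) :
    ContinuousOn (fun x => log (z x)) (Ici 0) :=
  fun _ hx => (hz.hasDerivAt_log hx).continuousAt.continuousWithinAt

theorem log_sub_log_le_integral (hz : IsPosLogisticSolution b a z) {φ : ℝ → ℝ} (hs : 0 ≤ s)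
    (hst : s ≤ t) (hφ : IntegrableOn φ (Icc s t))
    (hle : ∀ x ∈ Ioo s t, b x - a x * z x ≤ φ x) :
    log (z t) - log (z s) ≤ ∫ x in s..t, φ x :=
  sub_le_integral_of_hasDeriv_right_of_le hst
    (hz.continuousOn_log.mono fun _ hx => hs.trans hx.1)
    (fun _ hx => (hz.hasDerivAt_log (hs.trans hx.1.le)).hasDerivWithinAt) hφ hle

theorem log_le_log_add_mul (hz : IsPosLogisticSolution b a z) (hb : ∀ x ≥ 0, b x ≤ C)
    (ha : ∀ x ≥ 0, 0 ≤ a x) (hs : 0 ≤ s) (hst : s ≤ t) :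
    log (z t) ≤ log (z s) + C * (t - s) := by
  have := hz.log_sub_log_le_integral (φ := fun _ => C) hs hst
    continuousOn_const.integrableOn_Icc fun x hx => by
      have hx0 : 0 ≤ x := hs.trans hx.1.le
      nlinarith [hb x hx0, ha x hx0, hz.pos x hx0]
  rw [intervalIntegral.integral_const, smul_eq_mul] at this
  linarith

theorem log_add_le_of_forall_le (hz : IsPosLogisticSolution b a z) (hb : ∀ x ≥ 0, b x ≤ C)
    (ha : ∀ x ≥ 0, 0 ≤ a x) (ha_cont : ContinuousOn a (Ici 0)) (ht : 0 ≤ t) (hγ : 0 ≤ γ)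
    (hM : ∀ x ∈ Icc t (t + γ), M ≤ z x) :
    log (z (t + γ)) ≤ log (z t) + C * γ - M * ∫ x in t..t + γ, a x := by
  have hcont : ContinuousOn a (Icc t (t + γ)) := ha_cont.mono fun _ hx => ht.trans hx.1
  have := hz.log_sub_log_le_integral (φ := fun x => C - M * a x) ht (by linarith)
    (continuousOn_const.sub (hcont.const_smul M)).integrableOn_Icc fun x hx => by
      have hx0 : 0 ≤ x := ht.trans hx.1.le
      nlinarith [hb x hx0, ha x hx0, hM x (Ioo_subset_Icc_self hx)]
  rw [intervalIntegral.integral_sub intervalIntegrable_const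
    ((hcont.intervalIntegrable_of_Icc (by linarith)).const_mul M),
    intervalIntegral.integral_const_mul, intervalIntegral.integral_const, smul_eq_mul] at this
  linarith

theorem log_add_le_max (hz : IsPosLogisticSolution b a z) (hb : ∀ x ≥ 0, b x ≤ C) (hC : 0 ≤ C)
    (ha : ∀ x ≥ 0, 0 ≤ a x) (ha_cont : ContinuousOn a (Ici 0)) (ht : 0 ≤ t) (hγ : 0 ≤ γ)
    {α : ℝ} (hα : 0 < α) (hαa : α ≤ ∫ x in t..t + γ, a x) :
    log (z (t + γ)) ≤ max (log ((1 + C * γ) / α) + C * γ) (log (z t) - 1) := by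
  set M := (1 + C * γ) / α
  have hMα : M * α = 1 + C * γ := div_mul_cancel₀ _ hα.ne'
  by_cases hM : ∀ x ∈ Icc t (t + γ), M ≤ z x
  · have := hz.log_add_le_of_forall_le hb ha ha_cont ht hγ hM
    have : M * α ≤ M * ∫ x in t..t + γ, a x := by gcongr
    exact le_max_of_le_right (by linarith)
  · push Not at hM
    obtain ⟨x, hx, hzx⟩ := hM
    have hx0 : 0 ≤ x := ht.trans hx.1
    have := hz.log_le_log_add_mul hb ha hx0 hx.2
    have := log_lt_log (hz.pos x hx0) hzx
    exact le_max_of_le_left (by nlinarith [hx.1])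

end IsPosLogisticSolution

theorem stmt_13_general (b a : ℝ → ℝ)
    (ha_cont : ContinuousOn a (Set.Ici (0 : ℝ)))
    (hb_bdd : ∃ C : ℝ, ∀ t ≥ (0 : ℝ), |b t| ≤ C)
    (ha_nonneg : ∀ s ≥ (0 : ℝ), 0 ≤ a s)
    (γ : ℝ) (hγ : 0 < γ)
    (hH1 : 0 < Filter.liminf (fun t => ∫ s in t..(t + γ), a s) Filter.atTop) :
    ∃ M > (0 : ℝ), ∀ z : ℝ → ℝ,
      (∀ t ≥ (0 : ℝ), 0 < z t) →
      (∀ t ≥ (0 : ℝ), HasDerivAt z (z t * (b t - a t * z t)) t) →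
      Filter.limsup z Filter.atTop ≤ M := by
  obtain ⟨C, hC⟩ := hb_bdd
  have hb : ∀ t ≥ 0, b t ≤ C := fun t ht => (le_abs_self _).trans (hC t ht)
  have hC0 : 0 ≤ C := (abs_nonneg _).trans (hC 0 le_rfl)
  have hbdd : IsBoundedUnder (· ≥ ·) atTop fun t => ∫ s in t..(t + γ), a s :=
    isBoundedUnder_of_eventually_ge <| (eventually_ge_atTop 0).mono fun t ht =>
      integral_nonneg (by linarith) fun s hs => ha_nonneg s (ht.trans hs.1)
  set α := liminf (fun t => ∫ s in t..(t + γ), a s) atTop / 2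
  obtain ⟨T, hT⟩ := eventually_atTop.1
    ((eventually_lt_of_lt_liminf (half_lt_self hH1) hbdd).and (eventually_ge_atTop 0))
  set m := log ((1 + C * γ) / α) + C * γ
  refine ⟨exp m, exp_pos m, fun z hz hz' => ?_⟩
  have hsol : IsPosLogisticSolution b a z := ⟨hz, hz'⟩
  have hlog : ∀ᶠ t in atTop, log (z t) ≤ m :=
    eventually_le_of_le_max_sub_one hγ
      (fun t ht => hsol.log_add_le_max hb hC0 ha_nonneg ha_cont (hT t ht).2 hγ.le
        (half_pos hH1) (hT t ht).1.le)
      (isCompact_Icc.bddAbove_image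
        (hsol.continuousOn_log.mono fun _ hx => (hT T le_rfl).2.trans hx.1))
  refine limsup_le_of_le (isCoboundedUnder_le_of_eventually_le atTop (x := 0)
    ((eventually_ge_atTop 0).mono fun t ht => (hz t ht).le)) ?_
  filter_upwards [hlog, eventually_ge_atTop 0] with t hzt ht
  exact (log_le_iff_le_exp (hz t ht)).1 hzt

/-- Ultimate boundedness for the nonautonomous logistic ODE (Lemma 1 of Teng–Li):
under (H₁) there is a uniform `M > 0` with `limsup_{t→∞} z(t) ≤ M` for every positive
solution `z`. -/
theorem stmt_13 (b a : ℝ → ℝ)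
    (hb_cont : ContinuousOn b (Set.Ici (0 : ℝ)))
    (ha_cont : ContinuousOn a (Set.Ici (0 : ℝ)))
    (hb_bdd : ∃ C : ℝ, ∀ t ≥ (0 : ℝ), |b t| ≤ C)
    (ha_bdd : ∃ C : ℝ, ∀ t ≥ (0 : ℝ), |a t| ≤ C)
    (ha_nonneg : ∀ s ≥ (0 : ℝ), 0 ≤ a s)
    (γ : ℝ) (hγ : 0 < γ)
    (hH1 : 0 < Filter.liminf (fun t => ∫ s in t..(t + γ), a s) Filter.atTop) :
    ∃ M > (0 : ℝ), ∀ z : ℝ → ℝ,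
      (∀ t ≥ (0 : ℝ), 0 < z t) →
      (∀ t ≥ (0 : ℝ), HasDerivAt z (z t * (b t - a t * z t)) t) →
      Filter.limsup z Filter.atTop ≤ M :=
  stmt_13_general b a ha_cont hb_bdd ha_nonneg γ hγ hH1
end

section
/- Let b, a : [0,∞) → ℝ be bounded continuous functions with a(s) ≥ 0 for all s ≥ 0. Suppose there exist γ > 0 and λ > 0 such that liminf_{t→∞} ∫_t^{t+γ} a(s) ds > 0 and liminf_{t→∞} ∫_t^{t+λ} b(s) ds > 0. Then there exist constants 0 < m ≤ M such that every differentiable function z : [0,∞) → (0,∞) satisfying z'(t) = z(t)(b(t) − a(t)z(t)) for all t ≥ 0 obeys m ≤ liminf_{t→∞} z(t) and limsup_{t→∞} z(t) ≤ M. (This is the permanence result for the deterministic nonautonomous logistic equation, Lemma 1 of Teng and Li, to which the paper's stochastic permanence theorem reduces when the noise intensity vanishes.) -/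
open Filter MeasureTheory Set intervalIntegral


lemma aux_int (b a z : ℝ → ℝ) (hb : ContinuousOn b (Ici 0)) (ha : ContinuousOn a (Ici 0))
    (hz : ∀ t ≥ (0:ℝ), 0 < z t) (hz' : ∀ t ≥ (0:ℝ), HasDerivAt z (z t * (b t - a t * z t)) t)
    {w₁ w₂ : ℝ} (h0 : 0 ≤ w₁) (h12 : w₁ ≤ w₂) :
    IntervalIntegrable (fun s => b s - a s * z s) volume w₁ w₂ ∧
    IntervalIntegrable b volume w₁ w₂ ∧
    IntervalIntegrable (fun s => a s * z s) volume w₁ w₂ := by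
  have hsub : uIcc w₁ w₂ ⊆ Ici (0:ℝ) := by
    rw [uIcc_of_le h12]
    exact fun x hx => le_trans h0 hx.1
  have hzc : ContinuousOn z (uIcc w₁ w₂) :=
    fun x hx => ((hz' x (hsub hx)).continuousAt).continuousWithinAt
  have haz : ContinuousOn (fun s => a s * z s) (uIcc w₁ w₂) := (ha.mono hsub).mul hzc
  exact ⟨((hb.mono hsub).sub haz).intervalIntegrable, (hb.mono hsub).intervalIntegrable,
    haz.intervalIntegrable⟩

lemma aux_ftc (b a z : ℝ → ℝ) (hb : ContinuousOn b (Ici 0)) (ha : ContinuousOn a (Ici 0))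
    (hz : ∀ t ≥ (0:ℝ), 0 < z t) (hz' : ∀ t ≥ (0:ℝ), HasDerivAt z (z t * (b t - a t * z t)) t)
    {w₁ w₂ : ℝ} (h0 : 0 ≤ w₁) (h12 : w₁ ≤ w₂) :
    Real.log (z w₂) - Real.log (z w₁) = ∫ s in w₁..w₂, (b s - a s * z s) := by
  have hsub : uIcc w₁ w₂ ⊆ Ici (0:ℝ) := by
    rw [uIcc_of_le h12]
    exact fun x hx => le_trans h0 hx.1
  have hderiv : ∀ x ∈ uIcc w₁ w₂, HasDerivAt (fun s => Real.log (z s)) (b x - a x * z x) x := by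
    intro x hx
    have hx0 : (0:ℝ) ≤ x := hsub hx
    have hpos := hz x hx0
    have h := (hz' x hx0).log (ne_of_gt hpos)
    have : z x * (b x - a x * z x) / z x = b x - a x * z x := by
      field_simp
    rwa [this] at h
  rw [← intervalIntegral.integral_eq_sub_of_hasDerivAt hderiv
    (aux_int b a z hb ha hz hz' h0 h12).1]

lemma aux_le_const {f : ℝ → ℝ} {w₁ w₂ C : ℝ} (h12 : w₁ ≤ w₂)
    (hint : IntervalIntegrable f volume w₁ w₂) (hf : ∀ x ∈ Icc w₁ w₂, f x ≤ C) :
    ∫ s in w₁..w₂, f s ≤ C * (w₂ - w₁) := by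
  have := intervalIntegral.integral_mono_on h12 hint (_root_.intervalIntegrable_const (c := C)) hf
  simpa [intervalIntegral.integral_const, smul_eq_mul, mul_comm] using this

lemma aux_ge_const {f : ℝ → ℝ} {w₁ w₂ C : ℝ} (h12 : w₁ ≤ w₂)
    (hint : IntervalIntegrable f volume w₁ w₂) (hf : ∀ x ∈ Icc w₁ w₂, C ≤ f x) :
    C * (w₂ - w₁) ≤ ∫ s in w₁..w₂, f s := by
  have := intervalIntegral.integral_mono_on h12 (_root_.intervalIntegrable_const (c := C)) hint hf
  simpa [intervalIntegral.integral_const, smul_eq_mul, mul_comm] using this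

lemma aux_drop (b a z : ℝ → ℝ) (hb : ContinuousOn b (Ici 0)) (ha : ContinuousOn a (Ici 0))
    (ha_nonneg : ∀ s ≥ (0:ℝ), 0 ≤ a s)
    (hz : ∀ t ≥ (0:ℝ), 0 < z t) (hz' : ∀ t ≥ (0:ℝ), HasDerivAt z (z t * (b t - a t * z t)) t)
    {γ Cb α M₀ : ℝ} (hγ : 0 < γ) (hα : 0 < α) (hCb0 : 0 ≤ Cb)
    (hCb : ∀ t ≥ (0:ℝ), b t ≤ Cb)
    (hM₀ : M₀ = (Cb * γ + 1) / α)
    {w : ℝ} (hw0 : 0 ≤ w) (hwa : α ≤ ∫ s in w..w + γ, a s)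
    (hzM : ∀ s ∈ Icc w (w + γ), M₀ ≤ z s) :
    Real.log (z (w + γ)) ≤ Real.log (z w) - 1 := by
  have h12 : w ≤ w + γ := by linarith
  obtain ⟨hI, hIb, hIaz⟩ := aux_int b a z hb ha hz hz' hw0 h12
  have hftc := aux_ftc b a z hb ha hz hz' hw0 h12
  have hsplit : ∫ s in w..w + γ, (b s - a s * z s)
      = (∫ s in w..w + γ, b s) - ∫ s in w..w + γ, a s * z s :=
    intervalIntegral.integral_sub hIb hIaz
  have hM₀pos : 0 < M₀ := by rw [hM₀]; positivity
  have hbint : (∫ s in w..w + γ, b s) ≤ Cb * γ := by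
    calc (∫ s in w..w + γ, b s) ≤ Cb * ((w + γ) - w) :=
          aux_le_const h12 hIb (fun x hx => hCb x (le_trans hw0 hx.1))
      _ = Cb * γ := by ring
  have hsub : uIcc w (w + γ) ⊆ Ici (0:ℝ) := by
    rw [uIcc_of_le h12]; exact fun x hx => le_trans hw0 hx.1
  have hIa : IntervalIntegrable a volume w (w + γ) := (ha.mono hsub).intervalIntegrable
  have h1 : ∫ s in w..w + γ, M₀ * a s ≤ ∫ s in w..w + γ, a s * z s := by
    refine intervalIntegral.integral_mono_on h12 (hIa.const_mul M₀) hIaz (fun x hx => ?_)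
    have hax := ha_nonneg x (le_trans hw0 hx.1)
    have hzx := hzM x hx
    nlinarith
  have h2 : ∫ s in w..w + γ, M₀ * a s = M₀ * ∫ s in w..w + γ, a s :=
    intervalIntegral.integral_const_mul _ _
  have h3 : M₀ * α ≤ ∫ s in w..w + γ, a s * z s := by
    nlinarith [mul_le_mul_of_nonneg_left hwa (le_of_lt hM₀pos)]
  have h4 : M₀ * α = Cb * γ + 1 := by rw [hM₀]; field_simp
  linarith [hftc, hsplit]

lemma aux_grow (b a z : ℝ → ℝ) (hb : ContinuousOn b (Ici 0)) (ha : ContinuousOn a (Ici 0))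
    (ha_nonneg : ∀ s ≥ (0:ℝ), 0 ≤ a s)
    (hz : ∀ t ≥ (0:ℝ), 0 < z t) (hz' : ∀ t ≥ (0:ℝ), HasDerivAt z (z t * (b t - a t * z t)) t)
    {Cb : ℝ} (hCb : ∀ t ≥ (0:ℝ), b t ≤ Cb)
    {w₁ w₂ : ℝ} (h0 : 0 ≤ w₁) (h12 : w₁ ≤ w₂) :
    Real.log (z w₂) ≤ Real.log (z w₁) + Cb * (w₂ - w₁) := by
  obtain ⟨hI, hIb, hIaz⟩ := aux_int b a z hb ha hz hz' h0 h12
  have hftc := aux_ftc b a z hb ha hz hz' h0 h12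
  have hle : ∫ s in w₁..w₂, (b s - a s * z s) ≤ Cb * (w₂ - w₁) := by
    refine aux_le_const h12 hI (fun x hx => ?_)
    have hx0 : (0:ℝ) ≤ x := le_trans h0 hx.1
    have h1 := hCb x hx0
    have h2 := ha_nonneg x hx0
    have h3 := hz x hx0
    nlinarith
  linarith

lemma aux_decay (b a z : ℝ → ℝ) (hb : ContinuousOn b (Ici 0)) (ha : ContinuousOn a (Ici 0))
    (hz : ∀ t ≥ (0:ℝ), 0 < z t) (hz' : ∀ t ≥ (0:ℝ), HasDerivAt z (z t * (b t - a t * z t)) t)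
    {Cb Ca Mz : ℝ} (hCb : ∀ t ≥ (0:ℝ), -Cb ≤ b t) (hCa : ∀ t ≥ (0:ℝ), a t ≤ Ca)
    (hCa0 : 0 ≤ Ca)
    {w₁ w₂ : ℝ} (h0 : 0 ≤ w₁) (h12 : w₁ ≤ w₂) (hzM : ∀ s ∈ Icc w₁ w₂, z s ≤ Mz) :
    Real.log (z w₁) - (Cb + Ca * Mz) * (w₂ - w₁) ≤ Real.log (z w₂) := by
  obtain ⟨hI, hIb, hIaz⟩ := aux_int b a z hb ha hz hz' h0 h12
  have hftc := aux_ftc b a z hb ha hz hz' h0 h12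
  have hge : -(Cb + Ca * Mz) * (w₂ - w₁) ≤ ∫ s in w₁..w₂, (b s - a s * z s) := by
    refine aux_ge_const h12 hI (fun x hx => ?_)
    have hx0 : (0:ℝ) ≤ x := le_trans h0 hx.1
    have h1 := hCb x hx0
    have h2 := hCa x hx0
    have h3 := (hz x hx0).le
    have h4 := hzM x hx
    nlinarith [mul_le_mul h2 h4 h3 hCa0]
  linarith

lemma aux_rise (b a z : ℝ → ℝ) (hb : ContinuousOn b (Ici 0)) (ha : ContinuousOn a (Ici 0))
    (ha_nonneg : ∀ s ≥ (0:ℝ), 0 ≤ a s)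
    (hz : ∀ t ≥ (0:ℝ), 0 < z t) (hz' : ∀ t ≥ (0:ℝ), HasDerivAt z (z t * (b t - a t * z t)) t)
    {lam Ca β m₀ : ℝ} (hlam : 0 < lam) (hCa : ∀ t ≥ (0:ℝ), a t ≤ Ca) (hCa0 : 0 ≤ Ca)
    (hcond : Ca * m₀ * lam ≤ β / 2)
    {w : ℝ} (hw0 : 0 ≤ w) (hwb : β ≤ ∫ s in w..w + lam, b s)
    (hzm : ∀ s ∈ Icc w (w + lam), z s ≤ m₀) :
    Real.log (z w) + β / 2 ≤ Real.log (z (w + lam)) := by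
  have h12 : w ≤ w + lam := by linarith
  obtain ⟨hI, hIb, hIaz⟩ := aux_int b a z hb ha hz hz' hw0 h12
  have hftc := aux_ftc b a z hb ha hz hz' hw0 h12
  have hsplit : ∫ s in w..w + lam, (b s - a s * z s)
      = (∫ s in w..w + lam, b s) - ∫ s in w..w + lam, a s * z s :=
    intervalIntegral.integral_sub hIb hIaz
  have hazle : (∫ s in w..w + lam, a s * z s) ≤ Ca * m₀ * lam := by
    calc (∫ s in w..w + lam, a s * z s) ≤ (Ca * m₀) * ((w + lam) - w) := by
          refine aux_le_const h12 hIaz (fun x hx => ?_)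
          have hx0 : (0:ℝ) ≤ x := le_trans hw0 hx.1
          have h1 := hCa x hx0
          have h2 := hzm x hx
          have h3 := (hz x hx0).le
          have h4 := ha_nonneg x hx0
          nlinarith
      _ = Ca * m₀ * lam := by ring
  linarith

lemma aux_iter (u : ℕ → ℝ) (δ : ℝ) (N : ℕ) (h : ∀ j < N, u (j + 1) ≤ u j - δ) :
    u N ≤ u 0 - N * δ := by
  induction N with
  | zero => simp
  | succ n ih =>
    have h1 := h n (by omega)
    have h2 := ih (fun j hj => h j (by omega))
    push_cast
    linarith

set_option maxHeartbeats 1000000 in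
/-- Permanence for the nonautonomous logistic ODE (Lemma 1 of Teng–Li). -/
theorem stmt_14 (b a : ℝ → ℝ)
    (hb_cont : ContinuousOn b (Set.Ici (0 : ℝ)))
    (ha_cont : ContinuousOn a (Set.Ici (0 : ℝ)))
    (hb_bdd : ∃ C : ℝ, ∀ t ≥ (0 : ℝ), |b t| ≤ C)
    (ha_bdd : ∃ C : ℝ, ∀ t ≥ (0 : ℝ), |a t| ≤ C)
    (ha_nonneg : ∀ s ≥ (0 : ℝ), 0 ≤ a s)
    (γ lam : ℝ) (hγ : 0 < γ) (hlam : 0 < lam)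
    (hH1 : 0 < Filter.liminf (fun t => ∫ s in t..(t + γ), a s) Filter.atTop)
    (hH2 : 0 < Filter.liminf (fun t => ∫ s in t..(t + lam), b s) Filter.atTop) :
    ∃ m M : ℝ, 0 < m ∧ m ≤ M ∧ ∀ z : ℝ → ℝ,
      (∀ t ≥ (0 : ℝ), 0 < z t) →
      (∀ t ≥ (0 : ℝ), HasDerivAt z (z t * (b t - a t * z t)) t) →
      m ≤ Filter.liminf z Filter.atTop ∧ Filter.limsup z Filter.atTop ≤ M := by
  obtain ⟨Cb', hCb'⟩ := hb_bdd
  obtain ⟨Ca', hCa'⟩ := ha_bdd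
  set Cb := max Cb' 0 with hCbdef
  set Ca := max Ca' 0 with hCadef
  have hCb : ∀ t ≥ (0:ℝ), |b t| ≤ Cb := fun t ht => le_trans (hCb' t ht) (le_max_left _ _)
  have hCa : ∀ t ≥ (0:ℝ), |a t| ≤ Ca := fun t ht => le_trans (hCa' t ht) (le_max_left _ _)
  have hCb0 : (0:ℝ) ≤ Cb := le_max_right _ _
  have hCa0 : (0:ℝ) ≤ Ca := le_max_right _ _
  have hCbub : ∀ t ≥ (0:ℝ), b t ≤ Cb := fun t ht => (abs_le.1 (hCb t ht)).2
  have hCblb : ∀ t ≥ (0:ℝ), -Cb ≤ b t := fun t ht => (abs_le.1 (hCb t ht)).1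
  have hCaub : ∀ t ≥ (0:ℝ), a t ≤ Ca := fun t ht => (abs_le.1 (hCa t ht)).2
  have hIa : ∀ {w₁ w₂ : ℝ}, 0 ≤ w₁ → w₁ ≤ w₂ → IntervalIntegrable a volume w₁ w₂ := by
    intro w₁ w₂ h0 h12
    apply (ha_cont.mono _).intervalIntegrable
    rw [uIcc_of_le h12]; exact fun x hx => le_trans h0 hx.1
  have hIb : ∀ {w₁ w₂ : ℝ}, 0 ≤ w₁ → w₁ ≤ w₂ → IntervalIntegrable b volume w₁ w₂ := by
    intro w₁ w₂ h0 h12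
    apply (hb_cont.mono _).intervalIntegrable
    rw [uIcc_of_le h12]; exact fun x hx => le_trans h0 hx.1
  have hAbd : IsBoundedUnder (fun x1 x2 => x1 ≥ x2) atTop (fun t => ∫ s in t..(t + γ), a s) := by
    refine ⟨0, eventually_map.2 ?_⟩
    filter_upwards [eventually_ge_atTop (0:ℝ)] with t ht
    have h12 : t ≤ t + γ := by linarith
    have := aux_ge_const h12 (hIa ht h12) (fun x hx => ha_nonneg x (le_trans ht hx.1))
    simpa using this
  have hBbd : IsBoundedUnder (fun x1 x2 => x1 ≥ x2) atTop (fun t => ∫ s in t..(t + lam), b s) := by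
    refine ⟨-Cb * lam, eventually_map.2 ?_⟩
    filter_upwards [eventually_ge_atTop (0:ℝ)] with t ht
    have h12 : t ≤ t + lam := by linarith
    have := aux_ge_const h12 (hIb ht h12) (fun x hx => hCblb x (le_trans ht hx.1))
    calc -Cb * lam = -Cb * (t + lam - t) := by ring
      _ ≤ _ := this
  obtain ⟨T₁, hT₁⟩ := eventually_atTop.1
    (Filter.eventually_lt_of_lt_liminf (half_lt_self hH1) hAbd)
  obtain ⟨T₂, hT₂⟩ := eventually_atTop.1
    (Filter.eventually_lt_of_lt_liminf (half_lt_self hH2) hBbd)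
  set α := Filter.liminf (fun t => ∫ s in t..(t + γ), a s) Filter.atTop / 2 with hαdef
  set β := Filter.liminf (fun t => ∫ s in t..(t + lam), b s) Filter.atTop / 2 with hβdef
  have hα : 0 < α := half_pos hH1
  have hβ : 0 < β := half_pos hH2
  set T := max (max T₁ T₂) 0 with hTdef
  have hT0 : (0:ℝ) ≤ T := le_max_right _ _
  have hTa : ∀ t ≥ T, α ≤ ∫ s in t..(t + γ), a s :=
    fun t ht => (hT₁ t (le_trans (le_trans (le_max_left _ _) (le_max_left _ _)) ht)).le
  have hTb : ∀ t ≥ T, β ≤ ∫ s in t..(t + lam), b s :=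
    fun t ht => (hT₂ t (le_trans (le_trans (le_max_right _ _) (le_max_left _ _)) ht)).le
  have hCapos : 0 < Ca := by
    have h1 := hTa T le_rfl
    have h12 : T ≤ T + γ := by linarith
    have h2 : (∫ s in T..(T + γ), a s) ≤ Ca * γ := by
      calc (∫ s in T..(T + γ), a s) ≤ Ca * ((T + γ) - T) :=
            aux_le_const h12 (hIa hT0 h12) (fun x hx => hCaub x (le_trans hT0 hx.1))
        _ = Ca * γ := by ring
    nlinarith
  -- constants
  set M₀ := (Cb * γ + 1) / α with hM₀def
  have hM₀pos : 0 < M₀ := div_pos (by nlinarith) hα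
  set M := M₀ * Real.exp (Cb * γ) with hMdef
  have hMpos : 0 < M := mul_pos hM₀pos (Real.exp_pos _)
  have hM₀M : M₀ ≤ M := le_mul_of_one_le_right hM₀pos.le (Real.one_le_exp (by positivity))
  have hlogM : Real.log M = Real.log M₀ + Cb * γ := by
    rw [hMdef, Real.log_mul hM₀pos.ne' (Real.exp_ne_zero _), Real.log_exp]
  set m₀ := min (β / (2 * Ca * lam)) M with hm₀def
  have hm₀pos : 0 < m₀ := lt_min (by positivity) hMpos
  have hm₀M : m₀ ≤ M := min_le_right _ _
  have hm₀cond : Ca * m₀ * lam ≤ β / 2 := by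
    have h1 : m₀ ≤ β / (2 * Ca * lam) := min_le_left _ _
    have h2 : Ca * (β / (2 * Ca * lam)) * lam = β / 2 := by
      field_simp
    have h3 := mul_le_mul_of_nonneg_right (mul_le_mul_of_nonneg_left h1 hCa0) hlam.le
    linarith [h2 ▸ h3]
  set D := Cb + Ca * M with hDdef
  have hDpos : 0 < D := add_pos_of_nonneg_of_pos hCb0 (mul_pos hCapos hMpos)
  set m := m₀ * Real.exp (-(D * lam)) with hmdef
  have hmpos : 0 < m := mul_pos hm₀pos (Real.exp_pos _)
  have hmm₀ : m < m₀ := by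
    have h1 : Real.exp (-(D * lam)) < 1 := Real.exp_lt_one_iff.2 (by nlinarith)
    nlinarith [Real.exp_pos (-(D * lam))]
  have hmM : m ≤ M := le_trans hmm₀.le hm₀M
  have hlogm : Real.log m = Real.log m₀ - D * lam := by
    rw [hmdef, Real.log_mul hm₀pos.ne' (Real.exp_ne_zero _), Real.log_exp]; ring
  refine ⟨m, M, hmpos, hmM, ?_⟩
  intro z hz hz'
  have hzct : ∀ t ≥ (0:ℝ), ContinuousAt z t := fun t ht => (hz' t ht).continuousAt
  have hzcOn : ∀ s : Set ℝ, s ⊆ Ici 0 → ContinuousOn z s :=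
    fun s hs x hx => (hzct x (hs hx)).continuousWithinAt
  have drop : ∀ w, T ≤ w → (∀ s ∈ Icc w (w + γ), M₀ ≤ z s) →
      Real.log (z (w + γ)) ≤ Real.log (z w) - 1 := fun w hw hM' =>
    aux_drop b a z hb_cont ha_cont ha_nonneg hz hz' hγ hα hCb0 hCbub hM₀def
      (le_trans hT0 hw) (hTa w hw) hM'
  have grow : ∀ w₁ w₂ : ℝ, 0 ≤ w₁ → w₁ ≤ w₂ →
      Real.log (z w₂) ≤ Real.log (z w₁) + Cb * (w₂ - w₁) := fun w₁ w₂ h0 h12 =>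
    aux_grow b a z hb_cont ha_cont ha_nonneg hz hz' hCbub h0 h12
  -- dip existence
  have hdip : ∃ t₀, T ≤ t₀ ∧ z t₀ ≤ M₀ := by
    by_contra hcon
    push_neg at hcon
    obtain ⟨N, hN⟩ := exists_nat_gt (Real.log (z T) - Real.log M₀)
    have hiter := aux_iter (fun j => Real.log (z (T + j * γ))) 1 N (fun j hj => by
      have hjγ : (0:ℝ) ≤ (j:ℝ) * γ := by positivity
      have hw : T ≤ T + (j:ℝ) * γ := by linarith
      have hstep := drop (T + (j:ℝ) * γ) hw (fun s hs => (hcon s (le_trans hw hs.1)).le)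
      have he : T + (j:ℝ) * γ + γ = T + ((j:ℕ) + 1 : ℕ) * γ := by push_cast; ring
      rw [he] at hstep
      simpa using hstep)
    simp only [Nat.cast_zero, zero_mul, add_zero, mul_one] at hiter
    have hNγ : (0:ℝ) ≤ (N:ℝ) * γ := by positivity
    have hgt : Real.log M₀ < Real.log (z (T + N * γ)) :=
      Real.log_lt_log hM₀pos (hcon _ (by linarith))
    linarith
  obtain ⟨t₀, ht₀T, ht₀z⟩ := hdip
  have ht₀0 : (0:ℝ) ≤ t₀ := le_trans hT0 ht₀T
  -- upper claim
  have hupper : ∀ t, t₀ ≤ t → z t ≤ M := by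
    intro t ht
    by_contra hcon
    push_neg at hcon
    set S := Icc t₀ t ∩ z ⁻¹' (Iic M₀) with hSdef
    have hSclosed : IsClosed S :=
      (hzcOn (Icc t₀ t) (fun x hx => le_trans ht₀0 hx.1)).preimage_isClosed_of_isClosed
        isClosed_Icc isClosed_Iic
    have hSne : S.Nonempty := ⟨t₀, ⟨le_rfl, ht⟩, ht₀z⟩
    have hSbdd : BddAbove S := ⟨t, fun s hs => hs.1.2⟩
    set sb := sSup S with hsbdef
    have hsbS : sb ∈ S := hSclosed.csSup_mem hSne hSbdd
    have hsb0 : (0:ℝ) ≤ sb := le_trans ht₀0 hsbS.1.1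
    have hsbT : T ≤ sb := le_trans ht₀T hsbS.1.1
    have hsbt : sb ≤ t := hsbS.1.2
    have hzsb : z sb ≤ M₀ := hsbS.2
    have hgt : ∀ s, sb < s → s ≤ t → M₀ < z s := by
      intro s hs1 hs2
      by_contra h; push_neg at h
      have hmem : s ∈ S := ⟨⟨le_trans hsbS.1.1 hs1.le, hs2⟩, h⟩
      exact absurd (le_csSup hSbdd hmem) (not_le.2 hs1)
    have hsblt : sb < t := by
      rcases lt_or_eq_of_le hsbt with h | h
      · exact h
      · exfalso; rw [h] at hzsb; exact absurd hzsb (not_le.2 (lt_of_le_of_lt hM₀M hcon))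
    have hzge : ∀ s ∈ Icc sb t, M₀ ≤ z s := by
      intro s hs
      rcases eq_or_lt_of_le hs.1 with h | hlt
      · rw [← h]
        have htd : Filter.Tendsto z (nhdsWithin sb (Set.Ioi sb)) (nhds (z sb)) :=
          ((hzct sb hsb0).tendsto).mono_left nhdsWithin_le_nhds
        refine ge_of_tendsto htd ?_
        filter_upwards [Ioc_mem_nhdsGT_of_mem ⟨le_refl sb, hsblt⟩] with x hx
        exact (hgt x hx.1 hx.2).le
      · exact (hgt s hlt hs.2).le
    set k := ⌊(t - sb) / γ⌋₊ with hkdef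
    have hts : 0 ≤ (t - sb) / γ := div_nonneg (by linarith) hγ.le
    have hk1 : sb + (k:ℝ) * γ ≤ t := by
      have h1 := (le_div_iff₀ hγ).1 (Nat.floor_le hts)
      linarith
    have hk2 : t - (sb + (k:ℝ) * γ) < γ := by
      have h1 := (div_lt_iff₀ hγ).1 (Nat.lt_floor_add_one ((t - sb) / γ))
      have h3 : ((k:ℝ) + 1) * γ = (k:ℝ) * γ + γ := by ring
      linarith
    have hiter := aux_iter (fun j => Real.log (z (sb + j * γ))) 1 k (fun j hj => by
      have hj1 : (j:ℝ) + 1 ≤ (k:ℝ) := by exact_mod_cast Nat.succ_le_of_lt hj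
      have hjγ : (0:ℝ) ≤ (j:ℝ) * γ := by positivity
      have hw : T ≤ sb + (j:ℝ) * γ := by linarith
      have hsubset : Icc (sb + (j:ℝ) * γ) (sb + (j:ℝ) * γ + γ) ⊆ Icc sb t := by
        intro x hx
        constructor
        · linarith [hx.1]
        · have h2' := mul_le_mul_of_nonneg_right hj1 hγ.le
          have h3 : ((j:ℝ) + 1) * γ = (j:ℝ) * γ + γ := by ring
          linarith [hx.2]
      have hstep := drop (sb + (j:ℝ) * γ) hw (fun s hs => hzge s (hsubset hs))
      have he : sb + (j:ℝ) * γ + γ = sb + ((j:ℕ) + 1 : ℕ) * γ := by push_cast; ring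
      rw [he] at hstep
      simpa using hstep)
    simp only [Nat.cast_zero, zero_mul, add_zero, mul_one] at hiter
    have hkγ : (0:ℝ) ≤ (k:ℝ) * γ := by positivity
    have hgrow := grow (sb + (k:ℝ) * γ) t (by linarith) (by linarith)
    have hlog1 : Real.log (z sb) ≤ Real.log M₀ :=
      (Real.log_le_log_iff (hz sb hsb0) hM₀pos).2 hzsb
    have hk0 : (0:ℝ) ≤ (k:ℝ) := Nat.cast_nonneg k
    have hfin : Real.log (z t) ≤ Real.log M := by
      rw [hlogM]
      have h4 := mul_le_mul_of_nonneg_left hk2.le hCb0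
      linarith
    have hzt : z t ≤ M := by
      have h1 := Real.exp_le_exp.2 hfin
      rwa [Real.exp_log (hz t (le_trans ht₀0 ht)), Real.exp_log hMpos] at h1
    linarith
  -- decay and rise
  have decay : ∀ w₁ w₂ : ℝ, t₀ ≤ w₁ → w₁ ≤ w₂ →
      Real.log (z w₁) - D * (w₂ - w₁) ≤ Real.log (z w₂) := by
    intro w₁ w₂ h0 h12
    have := aux_decay b a z hb_cont ha_cont hz hz' hCblb hCaub hCa0
      (le_trans ht₀0 h0) h12 (fun s hs => hupper s (le_trans h0 hs.1))
    rw [hDdef]; exact this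
  have rise : ∀ w, t₀ ≤ w → (∀ s ∈ Icc w (w + lam), z s ≤ m₀) →
      Real.log (z w) + β / 2 ≤ Real.log (z (w + lam)) := fun w hw hm' =>
    aux_rise b a z hb_cont ha_cont ha_nonneg hz hz' hlam hCaub hCa0 hm₀cond
      (le_trans ht₀0 hw) (hTb w (le_trans ht₀T hw)) hm'
  -- peak existence
  have hpeak : ∃ t₁, t₀ ≤ t₁ ∧ m₀ ≤ z t₁ := by
    by_contra hcon
    push_neg at hcon
    obtain ⟨N, hN⟩ := exists_nat_gt ((Real.log m₀ - Real.log (z t₀)) / (β / 2))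
    have hiter := aux_iter (fun j => -Real.log (z (t₀ + j * lam))) (β / 2) N (fun j hj => by
      have hjl : (0:ℝ) ≤ (j:ℝ) * lam := by positivity
      have hw : t₀ ≤ t₀ + (j:ℝ) * lam := by linarith
      have hstep := rise (t₀ + (j:ℝ) * lam) hw (fun s hs => (hcon s (le_trans hw hs.1)).le)
      have he : t₀ + (j:ℝ) * lam + lam = t₀ + ((j:ℕ) + 1 : ℕ) * lam := by push_cast; ring
      rw [he] at hstep
      show -Real.log (z (t₀ + (((j:ℕ) + 1 : ℕ) : ℝ) * lam)) ≤
        -Real.log (z (t₀ + ((j:ℕ) : ℝ) * lam)) - β / 2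
      linarith)
    simp only [Nat.cast_zero, zero_mul, add_zero] at hiter
    have hNl : (0:ℝ) ≤ (N:ℝ) * lam := by positivity
    have hlt : Real.log (z (t₀ + (N:ℝ) * lam)) < Real.log m₀ :=
      Real.log_lt_log (hz _ (by linarith)) (hcon _ (by linarith))
    have h2 := (div_lt_iff₀ (half_pos hβ)).1 hN
    linarith
  obtain ⟨t₁, ht₁0, ht₁z⟩ := hpeak
  have ht₁nn : (0:ℝ) ≤ t₁ := le_trans ht₀0 ht₁0
  -- lower claim
  have hlower : ∀ t, t₁ ≤ t → m ≤ z t := by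
    intro t ht
    by_contra hcon
    push_neg at hcon
    set S' := Icc t₁ t ∩ z ⁻¹' (Ici m₀) with hS'def
    have hS'closed : IsClosed S' :=
      (hzcOn (Icc t₁ t) (fun x hx => le_trans ht₁nn hx.1)).preimage_isClosed_of_isClosed
        isClosed_Icc isClosed_Ici
    have hS'ne : S'.Nonempty := ⟨t₁, ⟨le_rfl, ht⟩, ht₁z⟩
    have hS'bdd : BddAbove S' := ⟨t, fun s hs => hs.1.2⟩
    set sb := sSup S' with hsbdef
    have hsbS : sb ∈ S' := hS'closed.csSup_mem hS'ne hS'bdd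
    have hsb0 : (0:ℝ) ≤ sb := le_trans ht₁nn hsbS.1.1
    have hsbt₀ : t₀ ≤ sb := le_trans ht₁0 hsbS.1.1
    have hsbt : sb ≤ t := hsbS.1.2
    have hzsb : m₀ ≤ z sb := hsbS.2
    have hgt : ∀ s, sb < s → s ≤ t → z s < m₀ := by
      intro s hs1 hs2
      by_contra h; push_neg at h
      have hmem : s ∈ S' := ⟨⟨le_trans hsbS.1.1 hs1.le, hs2⟩, h⟩
      exact absurd (le_csSup hS'bdd hmem) (not_le.2 hs1)
    have hsblt : sb < t := by
      rcases lt_or_eq_of_le hsbt with h | h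
      · exact h
      · exfalso; rw [h] at hzsb; exact absurd hzsb (not_le.2 (lt_of_lt_of_le hcon hmm₀.le))
    have hzle : ∀ s ∈ Icc sb t, z s ≤ m₀ := by
      intro s hs
      rcases eq_or_lt_of_le hs.1 with h | hlt
      · rw [← h]
        have htd : Filter.Tendsto z (nhdsWithin sb (Set.Ioi sb)) (nhds (z sb)) :=
          ((hzct sb hsb0).tendsto).mono_left nhdsWithin_le_nhds
        refine le_of_tendsto htd ?_
        filter_upwards [Ioc_mem_nhdsGT_of_mem ⟨le_refl sb, hsblt⟩] with x hx
        exact (hgt x hx.1 hx.2).le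
      · exact (hgt s hlt hs.2).le
    set k := ⌊(t - sb) / lam⌋₊ with hkdef
    have hts : 0 ≤ (t - sb) / lam := div_nonneg (by linarith) hlam.le
    have hk1 : sb + (k:ℝ) * lam ≤ t := by
      have h1 := (le_div_iff₀ hlam).1 (Nat.floor_le hts)
      linarith
    have hk2 : t - (sb + (k:ℝ) * lam) < lam := by
      have h1 := (div_lt_iff₀ hlam).1 (Nat.lt_floor_add_one ((t - sb) / lam))
      have h3 : ((k:ℝ) + 1) * lam = (k:ℝ) * lam + lam := by ring
      linarith
    have hiter := aux_iter (fun j => -Real.log (z (sb + j * lam))) (β / 2) k (fun j hj => by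
      have hj1 : (j:ℝ) + 1 ≤ (k:ℝ) := by exact_mod_cast Nat.succ_le_of_lt hj
      have hjl : (0:ℝ) ≤ (j:ℝ) * lam := by positivity
      have hw : t₀ ≤ sb + (j:ℝ) * lam := by linarith
      have hsubset : Icc (sb + (j:ℝ) * lam) (sb + (j:ℝ) * lam + lam) ⊆ Icc sb t := by
        intro x hx
        constructor
        · linarith [hx.1]
        · have h2' := mul_le_mul_of_nonneg_right hj1 hlam.le
          have h3 : ((j:ℝ) + 1) * lam = (j:ℝ) * lam + lam := by ring
          linarith [hx.2]
      have hstep := rise (sb + (j:ℝ) * lam) hw (fun s hs => hzle s (hsubset hs))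
      have he : sb + (j:ℝ) * lam + lam = sb + ((j:ℕ) + 1 : ℕ) * lam := by push_cast; ring
      rw [he] at hstep
      show -Real.log (z (sb + (((j:ℕ) + 1 : ℕ) : ℝ) * lam)) ≤
        -Real.log (z (sb + ((j:ℕ) : ℝ) * lam)) - β / 2
      linarith)
    simp only [Nat.cast_zero, zero_mul, add_zero] at hiter
    have hkl : (0:ℝ) ≤ (k:ℝ) * lam := by positivity
    have hdecay := decay (sb + (k:ℝ) * lam) t (by linarith) (by linarith)
    have hlog1 : Real.log m₀ ≤ Real.log (z sb) :=
      (Real.log_le_log_iff hm₀pos (hz sb hsb0)).2 hzsb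
    have hk0 : (0:ℝ) ≤ (k:ℝ) := Nat.cast_nonneg k
    have hfin : Real.log m ≤ Real.log (z t) := by
      rw [hlogm]
      have h4 := mul_le_mul_of_nonneg_left hk2.le hDpos.le
      have h5 : 0 ≤ (k:ℝ) * (β / 2) := mul_nonneg hk0 (by linarith)
      linarith
    have hzt : m ≤ z t := by
      have h1 := Real.exp_le_exp.2 hfin
      rwa [Real.exp_log hmpos, Real.exp_log (hz t (le_trans ht₁nn ht))] at h1
    linarith
  constructor
  · refine Filter.le_liminf_of_le ?_ ?_
    · exact Filter.IsBoundedUnder.isCoboundedUnder_ge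
        ⟨M, eventually_map.2 (eventually_atTop.2 ⟨t₀, fun s hs => hupper s hs⟩)⟩
    · exact eventually_atTop.2 ⟨t₁, fun s hs => hlower s hs⟩
  · refine Filter.limsup_le_of_le ?_ ?_
    · exact Filter.IsBoundedUnder.isCoboundedUnder_le
        ⟨m, eventually_map.2 (eventually_atTop.2 ⟨t₁, fun s hs => hlower s hs⟩)⟩
    · exact eventually_atTop.2 ⟨t₀, fun s hs => hupper s hs⟩
end
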